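/- arXiv:0905.0194 — 8 statements merged into one kernel-verified Lean document; each statement's English description precedes it below -/
import Mathlib

section
/- For every real number q with q > 0 and q ≠ 1 and all natural numbers n, m with n ≤ m, the following summation identity holds: Σ_{k=0}^{m−n} q^{(m−n+1)k} / (n+k+1)_q · (q^{−m+n};q)_k / (q;q)_k = (−1)^n q^{−mn + n(n−1)/2} / (m+1)_q · (q;q)_n / (q^{−m};q)_n. -/
/-- The q-shifted factorial `(a;q)_n = ∏_{i=0}^{n-1} (1 - a q^i)`. -/
def qPoch (a q : ℝ) (n : ℕ) : ℝ := ∏ i ∈ Finset.range n, (1 - a * q ^ i)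

/-- The q-number `(n)_q = (1 - q^n)/(1 - q)`. -/
noncomputable def qNum (q : ℝ) (n : ℕ) : ℝ := (1 - q ^ n) / (1 - q)

namespace QAux

lemma qpow_ne_one {q : ℝ} (hq : 0 < q) (hq1 : q ≠ 1) {l : ℕ} (hl : l ≠ 0) : q ^ l ≠ 1 := by
  rcases lt_or_gt_of_ne hq1 with h | h
  · exact (pow_lt_one₀ hq.le h hl).ne
  · exact (one_lt_pow₀ h hl).ne'

lemma qq_ne_zero {q : ℝ} (hq : 0 < q) (hq1 : q ≠ 1) (N : ℕ) : qPoch q q N ≠ 0 := by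
  rw [qPoch]
  apply Finset.prod_ne_zero_iff.mpr
  intro i _
  have h : q * q ^ i = q ^ (i + 1) := by ring
  rw [h]
  exact sub_ne_zero.mpr (Ne.symm (qpow_ne_one hq hq1 i.succ_ne_zero))

end QAux

namespace QAux

noncomputable def B (q : ℝ) : ℕ → ℕ → ℝ
  | 0, 0 => 1
  | 0, _+1 => 0
  | _+1, 0 => 1
  | N+1, k+1 => B q N (k+1) + q ^ (N - k) * B q N k

lemma B_zero_right (q : ℝ) (N : ℕ) : B q N 0 = 1 := by cases N <;> rfl

lemma B_eq_zero (q : ℝ) : ∀ N k : ℕ, N < k → B q N k = 0 := by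
  intro N
  induction N with
  | zero => intro k hk; match k, hk with | k+1, _ => rfl
  | succ N ih =>
    intro k hk
    match k, hk with
    | k+1, hk =>
      show B q N (k+1) + q ^ (N - k) * B q N k = 0
      rw [ih _ (by omega), ih _ (by omega)]
      ring

lemma qPoch_succ (a q : ℝ) (n : ℕ) :
    qPoch a q (n + 1) = qPoch a q n * (1 - a * q ^ n) := by
  rw [qPoch, qPoch, Finset.prod_range_succ]

lemma qPoch_zero (a q : ℝ) : qPoch a q 0 = 1 := by simp [qPoch]

lemma B_ratio (q : ℝ) (hP : ∀ j : ℕ, qPoch q q j ≠ 0) :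
    ∀ N k : ℕ, k ≤ N →
      B q N k * (qPoch q q k * qPoch q q (N - k)) = qPoch q q N := by
  intro N
  induction N with
  | zero => intro k hk; interval_cases k; simp [B_zero_right, qPoch]
  | succ N ih =>
    intro k hk
    match k with
    | 0 => simp [B_zero_right, qPoch]
    | k+1 =>
      show (B q N (k+1) + q ^ (N - k) * B q N k) * _ = _
      rcases Nat.lt_or_ge k N with hkN | hkN
      · -- k+1 ≤ N
        obtain ⟨j, rfl⟩ : ∃ j, N = k + 1 + j := ⟨N - k - 1, by omega⟩
        have h1 := ih (k+1) (by omega)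
        have h2 := ih k (by omega)
        have e1 : k + 1 + j - (k + 1) = j := by omega
        have e2 : k + 1 + j - k = j + 1 := by omega
        have e3 : k + 1 + j + 1 - (k + 1) = j + 1 := by omega
        rw [e1] at h1
        rw [e2] at h2
        rw [e2, e3, qPoch_succ q q j, qPoch_succ q q (k+1+j), qPoch_succ q q k] at *
        linear_combination (1 - q * q ^ j) * h1 + q ^ (j+1) * (1 - q * q ^ k) * h2
      · -- k = N
        have hk' : N = k := by omega
        subst hk'
        have h2 := ih N le_rfl
        rw [Nat.sub_self, qPoch_zero, mul_one] at h2
        have hBN : B q N N = 1 := by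
          have hPN := hP N
          exact mul_right_cancel₀ hPN (by rw [one_mul]; exact h2)
        rw [Nat.sub_self, Nat.sub_self, qPoch_zero, mul_one, hBN,
          B_eq_zero q N (N+1) (by omega)]
        ring
end QAux

namespace QAux

lemma qPoch_ne_zero' (t q : ℝ) (M : ℕ) (h : ∀ k, k < M → (1:ℝ) - t * q ^ k ≠ 0) :
    qPoch t q M ≠ 0 := by
  rw [qPoch]
  exact Finset.prod_ne_zero_iff.mpr fun i hi => h i (Finset.mem_range.mp hi)

lemma qPoch_add' (a q : ℝ) (s t : ℕ) :
    qPoch a q (s + t) = qPoch a q s * qPoch (a * q ^ s) q t := by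
  rw [qPoch, qPoch, qPoch, Finset.prod_range_add]
  congr 1
  refine Finset.prod_congr rfl fun i _ => ?_
  rw [pow_add]; ring

lemma exp_fact (k N : ℕ) (hk : k ≤ N) :
    (k+1)*(k+2)/2 + (N-k) = (N+1) + k*(k+1)/2 := by
  have h2 : k*(k+1) % 2 = 0 := Nat.even_iff.mp (Nat.even_mul_succ_self k)
  have h1 : (k+1)*(k+2) = k*(k+1) + 2*(k+1) := by ring
  set a := k*(k+1) with ha
  set b := (k+1)*(k+2) with hb
  omega

lemma pf {q : ℝ} (hq : 0 < q) (hq1 : q ≠ 1) :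
    ∀ (N : ℕ) (t : ℝ), (∀ k, k ≤ N → 1 - t * q ^ k ≠ 0) →
    ∑ k ∈ Finset.range (N + 1),
        (-1:ℝ)^k * q ^ (k*(k+1)/2) * B q N k / (1 - t * q ^ k)
      = qPoch q q N / qPoch t q (N + 1) := by
  intro N
  induction N with
  | zero =>
    intro t ht
    simp [B_zero_right, qPoch_succ, qPoch_zero]
  | succ N ih =>
    intro t ht
    have ht' : ∀ k, k ≤ N → 1 - t * q ^ k ≠ 0 := fun k hk => ht k (by omega)
    have ht'' : ∀ k, k ≤ N → 1 - (t*q) * q ^ k ≠ 0 := by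
      intro k hk
      have h := ht (k+1) (by omega)
      have : t * q ^ (k+1) = (t*q) * q ^ k := by ring
      rwa [this] at h
    have key : ∀ k, k ≤ N → (-1:ℝ)^(k+1) * q ^ ((k+1)*((k+1)+1)/2) * B q (N+1) (k+1) / (1 - t*q^(k+1))
        = (-1:ℝ)^(k+1) * q ^ ((k+1)*((k+1)+1)/2) * B q N (k+1) / (1 - t*q^(k+1))
          + (-q^(N+1)) * ((-1:ℝ)^k * q ^ (k*(k+1)/2) * B q N k / (1 - (t*q)*q^k)) := by
      intro k hk
      have hden : (t*q)*q^k = t*q^(k+1) := by ring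
      have hd : (1:ℝ) - t*q^(k+1) ≠ 0 := ht (k+1) (by omega)
      have hpow : q ^ ((k+1)*(k+2)/2) * q ^ (N-k) = q ^ (N+1) * q ^ (k*(k+1)/2) := by
        rw [← pow_add, ← pow_add, exp_fact k N hk]
      have hB : B q (N+1) (k+1) = B q N (k+1) + q ^ (N-k) * B q N k := rfl
      rw [hden, hB]
      field_simp
      linear_combination ((-1:ℝ)^(k+1) * B q N k * (1 - t*q^(k+1)) - (-1:ℝ)^k * B q N k * t * q^(k+1)) * hpow
    have hg0 : B q (N+1) 0 = B q N 0 := by rw [B_zero_right, B_zero_right]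
    have hP : qPoch (t*q) q (N+1) ≠ 0 := by
      apply qPoch_ne_zero'
      intro k hk
      exact ht'' k (by omega)
    have hPN : qPoch (t*q) q N ≠ 0 := by
      apply qPoch_ne_zero'
      intro k hk
      exact ht'' k (by omega)
    have h1t : (1:ℝ) - t ≠ 0 := by
      have := ht 0 (by omega)
      simpa using this
    have hb : (1:ℝ) - t * q ^ (N+1) ≠ 0 := ht (N+1) le_rfl
    have hone : qPoch t q 1 = 1 - t := by
      rw [qPoch, Finset.prod_range_one]; norm_num
    have hB2 : qPoch (t*q) q (N+1) = qPoch (t*q) q N * (1 - t * q ^ (N+1)) := by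
      rw [qPoch_succ]; ring
    have hA : qPoch t q (N+1) = (1 - t) * qPoch (t*q) q N := by
      have h := qPoch_add' t q 1 N
      rw [pow_one, hone, Nat.add_comm 1 N] at h
      exact h
    have hC : qPoch t q (N+1+1) = (1 - t) * (qPoch (t*q) q N * (1 - t * q ^ (N+1))) := by
      have h := qPoch_add' t q 1 (N+1)
      rw [pow_one, hone, hB2, Nat.add_comm 1 (N+1)] at h
      exact h
    have hQ : qPoch q q (N+1) = qPoch q q N * (1 - q * q ^ N) := qPoch_succ q q N
    calc ∑ k ∈ Finset.range (N+1+1), (-1:ℝ)^k * q ^ (k*(k+1)/2) * B q (N+1) k / (1 - t * q ^ k)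
        = (∑ k ∈ Finset.range (N+1), (-1:ℝ)^(k+1) * q ^ ((k+1)*((k+1)+1)/2) * B q (N+1) (k+1) / (1 - t * q ^ (k+1)))
            + (-1:ℝ)^0 * q ^ (0*(0+1)/2) * B q (N+1) 0 / (1 - t * q ^ 0) :=
          Finset.sum_range_succ' _ (N+1)
      _ = (∑ k ∈ Finset.range (N+1),
              ((-1:ℝ)^(k+1) * q ^ ((k+1)*((k+1)+1)/2) * B q N (k+1) / (1 - t*q^(k+1))
                + (-q^(N+1)) * ((-1:ℝ)^k * q ^ (k*(k+1)/2) * B q N k / (1 - (t*q)*q^k))))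
            + (-1:ℝ)^0 * q ^ (0*(0+1)/2) * B q (N+1) 0 / (1 - t * q ^ 0) := by
          exact congrArg (· + _) (Finset.sum_congr rfl fun k hk => key k (Finset.mem_range_succ_iff.mp hk))
      _ = ((∑ k ∈ Finset.range (N+1), (-1:ℝ)^(k+1) * q ^ ((k+1)*((k+1)+1)/2) * B q N (k+1) / (1 - t*q^(k+1)))
            + ∑ k ∈ Finset.range (N+1), (-q^(N+1)) * ((-1:ℝ)^k * q ^ (k*(k+1)/2) * B q N k / (1 - (t*q)*q^k)))
            + (-1:ℝ)^0 * q ^ (0*(0+1)/2) * B q (N+1) 0 / (1 - t * q ^ 0) := by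
          rw [Finset.sum_add_distrib]
      _ = ((∑ k ∈ Finset.range (N+1), (-1:ℝ)^(k+1) * q ^ ((k+1)*((k+1)+1)/2) * B q N (k+1) / (1 - t*q^(k+1)))
            + (-1:ℝ)^0 * q ^ (0*(0+1)/2) * B q N 0 / (1 - t * q ^ 0))
            + ∑ k ∈ Finset.range (N+1), (-q^(N+1)) * ((-1:ℝ)^k * q ^ (k*(k+1)/2) * B q N k / (1 - (t*q)*q^k)) := by
          rw [hg0]; ring
      _ = (∑ k ∈ Finset.range (N+1+1), (-1:ℝ)^k * q ^ (k*(k+1)/2) * B q N k / (1 - t * q ^ k))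
            + ∑ k ∈ Finset.range (N+1), (-q^(N+1)) * ((-1:ℝ)^k * q ^ (k*(k+1)/2) * B q N k / (1 - (t*q)*q^k)) := by
          exact congrArg (· + _) (Finset.sum_range_succ' (fun k => (-1:ℝ)^k * q ^ (k*(k+1)/2) * B q N k / (1 - t * q ^ k)) (N+1)).symm
      _ = ((∑ k ∈ Finset.range (N+1), (-1:ℝ)^k * q ^ (k*(k+1)/2) * B q N k / (1 - t * q ^ k))
            + (-1:ℝ)^(N+1) * q ^ ((N+1)*((N+1)+1)/2) * B q N (N+1) / (1 - t * q ^ (N+1)))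
            + ∑ k ∈ Finset.range (N+1), (-q^(N+1)) * ((-1:ℝ)^k * q ^ (k*(k+1)/2) * B q N k / (1 - (t*q)*q^k)) := by
          rw [Finset.sum_range_succ]
      _ = (∑ k ∈ Finset.range (N+1), (-1:ℝ)^k * q ^ (k*(k+1)/2) * B q N k / (1 - t * q ^ k))
            + (-q^(N+1)) * ∑ k ∈ Finset.range (N+1), (-1:ℝ)^k * q ^ (k*(k+1)/2) * B q N k / (1 - (t*q)*q^k) := by
          rw [B_eq_zero q N (N+1) (by omega), ← Finset.mul_sum]
          ring
      _ = qPoch q q N / qPoch t q (N+1) + (-q^(N+1)) * (qPoch q q N / qPoch (t*q) q (N+1)) := by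
          rw [ih t ht', ih (t*q) ht'']
      _ = qPoch q q (N+1) / qPoch t q (N+1+1) := by
          rw [hA, hC, hQ, hB2]
          field_simp
          ring

end QAux

namespace QAux

lemma sum_range_id' (k : ℕ) : ∑ i ∈ Finset.range k, i = k * (k-1) / 2 := by
  have := Finset.sum_range_id_mul_two k
  omega

lemma qPoch_neg_pow {q : ℝ} (hq : 0 < q) (k N : ℕ) (hk : k ≤ N) :
    qPoch (q ^ (-(N:ℤ))) q k * q ^ (N*k) * qPoch q q (N-k)
      = (-1)^k * q ^ (k*(k-1)/2) * qPoch q q N := by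
  have hq0 : q ≠ 0 := ne_of_gt hq
  have hqN : (q:ℝ) ^ N ≠ 0 := pow_ne_zero _ hq0
  have h1 : qPoch (q ^ (-(N:ℤ))) q k * q ^ (N*k) = ∏ i ∈ Finset.range k, (q^N - q^i) := by
    rw [qPoch, show (q:ℝ)^(N*k) = ∏ _i ∈ Finset.range k, q^N from by
      rw [Finset.prod_const, Finset.card_range, ← pow_mul], ← Finset.prod_mul_distrib]
    refine Finset.prod_congr rfl fun i _ => ?_
    rw [zpow_neg, zpow_natCast]
    field_simp
  have h2 : ∏ i ∈ Finset.range k, ((q:ℝ)^N - q^i)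
      = (-1)^k * q ^ (k*(k-1)/2) * ∏ i ∈ Finset.range k, (1 - q^(N-i)) := by
    have e : ∀ i ∈ Finset.range k, (q:ℝ)^N - q^i = (-1) * q^i * (1 - q^(N-i)) := by
      intro i hi
      have : (q:ℝ)^i * q^(N-i) = q^N := by
        rw [← pow_add]
        congr 1
        have := Finset.mem_range.mp hi
        omega
      linear_combination -this
    rw [Finset.prod_congr rfl e, Finset.prod_mul_distrib, Finset.prod_mul_distrib,
      Finset.prod_const, Finset.card_range, Finset.prod_pow_eq_pow_sum, sum_range_id']
  have h3 : ∏ i ∈ Finset.range k, (1 - (q:ℝ)^(N-i)) = qPoch (q * q^(N-k)) q k := by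
    rw [qPoch, ← Finset.prod_range_reflect]
    refine Finset.prod_congr rfl fun j hj => ?_
    have hj' := Finset.mem_range.mp hj
    congr 1
    rw [show q * q^(N-k) * q^j = q^(N-k+1+j) from by rw [← pow_succ', ← pow_add]]
    congr 1
    omega
  have h4 : qPoch q q (N-k) * qPoch (q * q^(N-k)) q k = qPoch q q N := by
    rw [← qPoch_add' q q (N-k) k]
    congr 1
    omega
  rw [h1, h2, h3]
  linear_combination ((-1:ℝ))^k * q ^ (k*(k-1)/2) * h4

end QAux


namespace QAux

lemma exp_fact2 (k : ℕ) : k*(k+1)/2 = k*(k-1)/2 + k := by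
  cases k with
  | zero => simp
  | succ j =>
    have h2 : (j+1)*j % 2 = 0 := Nat.even_iff.mp (by rw [Nat.mul_comm]; exact Nat.even_mul_succ_self j)
    have h1 : (j+1)*(j+1+1) = (j+1)*j + 2*(j+1) := by ring
    have h3 : (j+1)*(j+1-1) = (j+1)*j := by simp
    set a := (j+1)*j with ha
    omega

end QAux

open QAux in
/-- the summation identity
`Σ_{k=0}^{m−n} q^{(m−n+1)k} / (n+k+1)_q · (q^{−m+n};q)_k / (q;q)_k
   = (−1)^n q^{−mn + n(n−1)/2} / (m+1)_q · (q;q)_n / (q^{−m};q)_n`. -/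
theorem q_sum_identity (q : ℝ) (hq : 0 < q) (hq1 : q ≠ 1) (n m : ℕ) (hnm : n ≤ m) :
    ∑ k ∈ Finset.range (m - n + 1),
        q ^ ((m - n + 1) * k) / qNum q (n + k + 1) *
          (qPoch (q ^ (-(m : ℤ) + (n : ℤ))) q k / qPoch q q k)
      = (-1) ^ n * q ^ (-(m : ℤ) * (n : ℤ) + (n : ℤ) * ((n : ℤ) - 1) / 2) / qNum q (m + 1) *
          (qPoch q q n / qPoch (q ^ (-(m : ℤ))) q n) := by
  obtain ⟨N, rfl⟩ : ∃ N, m = n + N := ⟨m - n, by omega⟩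
  have hq0 : q ≠ 0 := ne_of_gt hq
  have h1q : (1:ℝ) - q ≠ 0 := sub_ne_zero.mpr (Ne.symm hq1)
  have hP : ∀ j : ℕ, qPoch q q j ≠ 0 := qq_ne_zero hq hq1
  have hmn : n + N - n = N := by omega
  rw [hmn, show (-(↑(n + N) : ℤ) + (n:ℤ)) = -(N:ℤ) from by push_cast; ring]
  have hpow1 : ∀ l : ℕ, l ≠ 0 → (1:ℝ) - q ^ l ≠ 0 :=
    fun l hl => sub_ne_zero.mpr (Ne.symm (qpow_ne_one hq hq1 hl))
  have ht : ∀ k, k ≤ N → (1:ℝ) - q^(n+1) * q^k ≠ 0 := by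
    intro k hk
    rw [show (q:ℝ)^(n+1) * q^k = q^(n+1+k) from by rw [← pow_add]]
    exact hpow1 _ (by omega)
  have hterm : ∀ k, k ≤ N →
      q ^ ((N + 1) * k) / qNum q (n + k + 1) * (qPoch (q ^ (-(N:ℤ))) q k / qPoch q q k)
      = (1 - q) * ((-1:ℝ)^k * q ^ (k*(k+1)/2) * B q N k / (1 - q^(n+1) * q^k)) := by
    intro k hk
    have hA := qPoch_neg_pow hq k N hk
    have hBr := B_ratio q hP N k hk
    have hAdiv : qPoch (q ^ (-(N:ℤ))) q k
        = ((-1:ℝ)^k * q ^ (k*(k-1)/2) * qPoch q q N) / (q^(N*k) * qPoch q q (N-k)) := by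
      rw [eq_div_iff (mul_ne_zero (pow_ne_zero _ hq0) (hP (N-k)))]
      linear_combination hA
    have hBdiv : B q N k = qPoch q q N / (qPoch q q k * qPoch q q (N-k)) := by
      rw [eq_div_iff (mul_ne_zero (hP k) (hP (N-k)))]
      linear_combination hBr
    rw [hAdiv, hBdiv, show (q:ℝ)^((N+1)*k) = q^(N*k) * q^k from by
        rw [← pow_add]; congr 1; ring,
      show (q:ℝ)^(k*(k+1)/2) = q^(k*(k-1)/2) * q^k from by
        rw [← pow_add, exp_fact2],
      show (q:ℝ)^(n+1) * q^k = q^(n+k+1) from by rw [← pow_add]; congr 1; omega]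
    simp only [qNum]
    have hd1 : (1:ℝ) - q^(n+k+1) ≠ 0 := hpow1 _ (by omega)
    field_simp [hq0, h1q, hd1, hP k, hP (N-k)]
  have hsum : ∑ k ∈ Finset.range (N+1),
      q ^ ((N + 1) * k) / qNum q (n + k + 1) * (qPoch (q ^ (-(N:ℤ))) q k / qPoch q q k)
      = ∑ k ∈ Finset.range (N+1),
        (1 - q) * ((-1:ℝ)^k * q ^ (k*(k+1)/2) * B q N k / (1 - q^(n+1) * q^k)) :=
    Finset.sum_congr rfl fun k hk => hterm k (Finset.mem_range_succ_iff.mp hk)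
  rw [hsum, ← Finset.mul_sum, pf hq hq1 N (q^(n+1)) ht]
  -- now the closed-form equality
  have hE : (q:ℝ) ^ (-(↑(n+N):ℤ) * (n:ℤ) + (n:ℤ)*((n:ℤ)-1)/2)
      = q ^ (n*(n-1)/2) / q ^ ((n+N)*n) := by
    have h1 : ((n*(n-1)/2 : ℕ) : ℤ) = (n:ℤ)*((n:ℤ)-1)/2 := by
      have e : (n:ℤ)*((n:ℤ)-1) = ((n*(n-1) : ℕ) : ℤ) := by
        cases n with
        | zero => simp
        | succ j => push_cast [Nat.succ_sub_one]; ring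
      have hev : n*(n-1) % 2 = 0 := by
        cases n with
        | zero => simp
        | succ j =>
          simpa [Nat.succ_sub_one, Nat.mul_comm] using Nat.even_iff.mp (Nat.even_mul_succ_self j)
      obtain ⟨c, hc⟩ : ∃ c, n*(n-1) = 2*c := ⟨n*(n-1)/2, by omega⟩
      rw [e, hc]
      push_cast
      omega
    have h2 : (((n+N)*n : ℕ) : ℤ) = (↑(n+N):ℤ) * (n:ℤ) := by push_cast; ring
    rw [show (-(↑(n+N):ℤ) * (n:ℤ) + (n:ℤ)*((n:ℤ)-1)/2)
        = ((n*(n-1)/2 : ℕ) : ℤ) - (((n+N)*n : ℕ) : ℤ) from by rw [h1, h2]; ring,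
      zpow_sub₀ hq0, zpow_natCast, zpow_natCast]
  rw [hE]
  have hDneg := qPoch_neg_pow hq n (n+N) (by omega)
  rw [hmn] at hDneg
  have hDdiv : qPoch (q ^ (-(↑(n+N):ℤ))) q n
      = ((-1:ℝ)^n * q^(n*(n-1)/2) * qPoch q q (n+N)) / (q^((n+N)*n) * qPoch q q N) := by
    rw [eq_div_iff (mul_ne_zero (pow_ne_zero _ hq0) (hP N))]
    linear_combination hDneg
  have hSdiv : qPoch (q^(n+1)) q (N+1) = qPoch q q (n+N+1) / qPoch q q n := by
    rw [eq_div_iff (hP n)]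
    have h := qPoch_add' q q n (N+1)
    rw [show q * q^n = q^(n+1) from by ring, show n + (N+1) = n+N+1 from by omega] at h
    linear_combination h.symm
  rw [hDdiv, hSdiv]
  simp only [qNum]
  have hM1 : qPoch q q (n+N+1) = qPoch q q (n+N) * (1 - q * q^(n+N)) := qPoch_succ q q (n+N)
  have hd2 : (1:ℝ) - q^(n+N+1) ≠ 0 := hpow1 _ (by omega)
  have hd3 : (1:ℝ) - q * q^(n+N) ≠ 0 := by
    rw [show q * q^(n+N) = q^(n+N+1) from by ring]
    exact hd2
  rw [hM1, show (q:ℝ)^(n+N+1) = q * q^(n+N) from by ring]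
  rcases neg_one_pow_eq_or ℝ n with hsg | hsg <;>
    rw [hsg] <;>
    field_simp [hq0, h1q, hd3, hP n, hP N, hP (n+N)] <;>
    ring
end

section
/- For every real number q with q > 0 and q ≠ 1, every integer r ≥ 1, every natural number n, and every complex number x, define I_{r,n}(x) = Σ_{k=0}^{r} q^{rk} (q^{−r};q)_k / (q;q)_k · x^{n+k+1} / (n+k+1)_q. Then the recurrence I_{r,n}(x) = (x^{n+1} / (n+1)_q) · (xq^{−1};q)_r + (q^{−1} (r)_q / (n+1)_q) · I_{r−1,n+1}(x) holds, where (xq^{−1};q)_r = ∏_{i=0}^{r−1}(1 − x q^{i−1}). -/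
/-- The q-shifted factorial `(a;q)_n = ∏_{i=0}^{n-1} (1 - a q^i)` (complex version). -/
def qPochC (a q : ℂ) (n : ℕ) : ℂ := ∏ i ∈ Finset.range n, (1 - a * q ^ i)

/-- `I_{r,n}(x) = Σ_{k=0}^{r} q^{rk} (q^{−r};q)_k / (q;q)_k · x^{n+k+1} / (n+k+1)_q`,
the Jackson q-integral `∫_0^x t^n (t;q)_r d_q t`. -/
noncomputable def Iqint (q : ℝ) (r n : ℕ) (x : ℂ) : ℂ :=
  ∑ k ∈ Finset.range (r + 1),
    (q : ℂ) ^ (r * k) *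
      (qPochC ((q : ℂ) ^ (-(r : ℤ))) (q : ℂ) k / qPochC (q : ℂ) (q : ℂ) k) *
      x ^ (n + k + 1) / ((qNum q (n + k + 1) : ℝ) : ℂ)

open Finset

noncomputable def NNc (q : ℝ) (r k : ℕ) : ℂ :=
  ∏ i ∈ Finset.range k, ((q : ℂ) ^ r - (q : ℂ) ^ i)

lemma qpow_ne_one {q : ℝ} (hq : 0 < q) (hq1 : q ≠ 1) {m : ℕ} (hm : m ≠ 0) :
    q ^ m ≠ 1 := by
  rcases lt_trichotomy q 1 with h | h | h
  · exact ne_of_lt (pow_lt_one₀ hq.le h hm)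
  · exact absurd h hq1
  · exact ne_of_gt (one_lt_pow₀ h hm)

lemma one_sub_cpow_ne {q : ℝ} (hq : 0 < q) (hq1 : q ≠ 1) {m : ℕ} (hm : m ≠ 0) :
    (1 : ℂ) - (q : ℂ) ^ m ≠ 0 := by
  have h : ((q ^ m : ℝ) : ℂ) ≠ ((1 : ℝ) : ℂ) := by
    exact_mod_cast qpow_ne_one hq hq1 hm
  push_cast at h
  exact sub_ne_zero.mpr h.symm

lemma qPochC_QQ_ne {q : ℝ} (hq : 0 < q) (hq1 : q ≠ 1) (k : ℕ) :
    qPochC (q : ℂ) (q : ℂ) k ≠ 0 := by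
  unfold qPochC
  refine Finset.prod_ne_zero_iff.mpr fun i _ => ?_
  have h : (q : ℂ) * (q : ℂ) ^ i = (q : ℂ) ^ (i + 1) := (pow_succ' _ _).symm
  rw [h]
  exact one_sub_cpow_ne hq hq1 (Nat.succ_ne_zero i)

lemma NNc_succ (q : ℝ) (r k : ℕ) :
    NNc q r (k + 1) = NNc q r k * ((q : ℂ) ^ r - (q : ℂ) ^ k) :=
  Finset.prod_range_succ _ _

lemma NNc_succ_left (q : ℝ) (r k : ℕ) :
    NNc q (r + 1) (k + 1) = ((q : ℂ) ^ (r + 1) - 1) * ((q : ℂ) ^ k * NNc q r k) := by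
  unfold NNc
  rw [Finset.prod_range_succ']
  have h1 : ∀ i ∈ Finset.range k,
      (q : ℂ) ^ (r + 1) - (q : ℂ) ^ (i + 1) = (q : ℂ) * ((q : ℂ) ^ r - (q : ℂ) ^ i) := by
    intro i _; ring
  rw [Finset.prod_congr rfl h1, Finset.prod_mul_distrib, Finset.prod_const,
    Finset.card_range]
  ring

lemma qPochC_QQ_succ (q : ℝ) (k : ℕ) :
    qPochC (q : ℂ) (q : ℂ) (k + 1) = qPochC (q : ℂ) (q : ℂ) k * (1 - (q : ℂ) ^ (k + 1)) := by
  unfold qPochC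
  rw [Finset.prod_range_succ, pow_succ']

lemma qNum_cast (q : ℝ) (m : ℕ) :
    ((qNum q m : ℝ) : ℂ) = (1 - (q : ℂ) ^ m) / (1 - (q : ℂ)) := by
  unfold qNum; push_cast; ring

lemma coeff_eq {q : ℝ} (hq : 0 < q) (r k : ℕ) :
    (q : ℂ) ^ (r * k) * qPochC ((q : ℂ) ^ (-(r : ℤ))) (q : ℂ) k = NNc q r k := by
  have hQ : (q : ℂ) ≠ 0 := by exact_mod_cast hq.ne'
  unfold qPochC NNc
  have hc : ((q : ℂ) ^ r) ^ k = ∏ _i ∈ Finset.range k, (q : ℂ) ^ r := by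
    rw [Finset.prod_const, Finset.card_range]
  rw [pow_mul, hc, ← Finset.prod_mul_distrib]
  refine Finset.prod_congr rfl fun i _ => ?_
  have h : (q : ℂ) ^ (-(r : ℤ)) = ((q : ℂ) ^ r)⁻¹ := by
    rw [zpow_neg, zpow_natCast]
  rw [h, mul_sub, mul_one, ← mul_assoc, mul_inv_cancel₀ (pow_ne_zero r hQ), one_mul]

lemma prod_eq {q : ℝ} (hq : 0 < q) (x : ℂ) (r : ℕ) :
    ∏ i ∈ Finset.range r, (1 - x * (q : ℂ) ^ ((i : ℤ) - 1)) =
      qPochC (x * (q : ℂ)⁻¹) (q : ℂ) r := by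
  have hQ : (q : ℂ) ≠ 0 := by exact_mod_cast hq.ne'
  unfold qPochC
  refine Finset.prod_congr rfl fun i _ => ?_
  congr 1
  rw [zpow_sub₀ hQ, zpow_natCast, zpow_one]
  ring

lemma qbinom {q : ℝ} (hq : 0 < q) (hq1 : q ≠ 1) (a : ℂ) (r : ℕ) :
    qPochC a (q : ℂ) r =
      ∑ k ∈ Finset.range (r + 1), NNc q r k / qPochC (q : ℂ) (q : ℂ) k * a ^ k := by
  induction r with
  | zero => simp [qPochC, NNc]
  | succ r ih =>
    have hQ : (q : ℂ) ≠ 0 := by exact_mod_cast hq.ne'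
    have hstep : qPochC a (q : ℂ) (r + 1) = qPochC a (q : ℂ) r * (1 - a * (q : ℂ) ^ r) :=
      Finset.prod_range_succ _ _
    have hzero : NNc q r (r + 1) = 0 := by
      unfold NNc
      exact Finset.prod_eq_zero (Finset.self_mem_range_succ r) (by ring)
    have hdrop : ∀ b : ℂ,
        (∑ k ∈ Finset.range (r + 2), NNc q r k / qPochC (q : ℂ) (q : ℂ) k * b ^ k)
        = ∑ k ∈ Finset.range (r + 1), NNc q r k / qPochC (q : ℂ) (q : ℂ) k * b ^ k := by
      intro b
      rw [Finset.sum_range_succ, hzero]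
      simp
    have hterm : ∀ k ∈ Finset.range (r + 1),
        NNc q (r+1) (k+1) / qPochC (q:ℂ) (q:ℂ) (k+1) * a ^ (k+1)
        = NNc q r (k+1) / qPochC (q:ℂ) (q:ℂ) (k+1) * a ^ (k+1)
          - (NNc q r k / qPochC (q:ℂ) (q:ℂ) k * a ^ k) * (a * (q:ℂ) ^ r) := by
      intro k _
      rw [NNc_succ_left, NNc_succ, qPochC_QQ_succ]
      have hP : qPochC (q:ℂ) (q:ℂ) k ≠ 0 := qPochC_QQ_ne hq hq1 k
      have h1 : (1 : ℂ) - (q:ℂ) ^ (k+1) ≠ 0 := one_sub_cpow_ne hq hq1 (Nat.succ_ne_zero k)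
      field_simp
      ring
    rw [hstep, ih, mul_sub, mul_one]
    nth_rewrite 1 [← hdrop a]
    rw [Finset.sum_mul]
    rw [Finset.sum_range_succ' (fun k => NNc q (r+1) k / qPochC (q:ℂ) (q:ℂ) k * a ^ k) (r+1)]
    rw [Finset.sum_range_succ' (fun k => NNc q r k / qPochC (q:ℂ) (q:ℂ) k * a ^ k) (r+1)]
    rw [Finset.sum_congr rfl hterm, Finset.sum_sub_distrib]
    simp [NNc, qPochC]
    ring

lemma Iqint_eq {q : ℝ} (hq : 0 < q) (r n : ℕ) (x : ℂ) :
    Iqint q r n x = ∑ k ∈ Finset.range (r + 1),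
      NNc q r k / qPochC (q : ℂ) (q : ℂ) k * x ^ (n + k + 1) /
        ((1 - (q : ℂ) ^ (n + k + 1)) / (1 - (q : ℂ))) := by
  unfold Iqint
  refine Finset.sum_congr rfl fun k _ => ?_
  rw [qNum_cast, ← coeff_eq hq r k]
  ring

set_option maxHeartbeats 1000000 in
/-- the recurrence
`I_{r,n}(x) = (x^{n+1}/(n+1)_q)·(xq^{−1};q)_r + (q^{−1}(r)_q/(n+1)_q)·I_{r−1,n+1}(x)`,
where `(xq^{−1};q)_r = ∏_{i=0}^{r−1}(1 − x q^{i−1})`. -/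
theorem Iqint_recurrence (q : ℝ) (hq : 0 < q) (hq1 : q ≠ 1) (r : ℕ) (hr : 1 ≤ r)
    (n : ℕ) (x : ℂ) :
    Iqint q r n x =
      x ^ (n + 1) / ((qNum q (n + 1) : ℝ) : ℂ) *
          (∏ i ∈ Finset.range r, (1 - x * (q : ℂ) ^ ((i : ℤ) - 1)))
        + ((q⁻¹ * qNum q r / qNum q (n + 1) : ℝ) : ℂ) * Iqint q (r - 1) (n + 1) x := by
  obtain ⟨s, rfl⟩ : ∃ s, r = s + 1 := ⟨r - 1, (Nat.succ_pred_eq_of_pos hr).symm⟩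
  have hQ : (q : ℂ) ≠ 0 := by exact_mod_cast hq.ne'
  have hQ1 : (1 : ℂ) - (q : ℂ) ≠ 0 := by
    have := one_sub_cpow_ne hq hq1 (m := 1) one_ne_zero
    simpa using this
  simp only [Nat.add_sub_cancel]
  rw [Iqint_eq hq, Iqint_eq hq, prod_eq hq, qbinom hq hq1, qNum_cast, Finset.mul_sum,
    Finset.mul_sum]
  have h2 : (1 : ℂ) - (q : ℂ) ^ (n + 1) ≠ 0 := one_sub_cpow_ne hq hq1 (by omega)
  have hC2 : ((q⁻¹ * qNum q (s + 1) / qNum q (n + 1) : ℝ) : ℂ)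
      = (1 - (q : ℂ) ^ (s + 1)) / ((q : ℂ) * (1 - (q : ℂ) ^ (n + 1))) := by
    unfold qNum; push_cast
    field_simp
  rw [Finset.sum_range_succ'
    (fun k => NNc q (s + 1) k / qPochC (q : ℂ) (q : ℂ) k * x ^ (n + k + 1) /
      ((1 - (q : ℂ) ^ (n + k + 1)) / (1 - (q : ℂ)))) (s + 1)]
  rw [Finset.sum_range_succ'
    (fun i => x ^ (n + 1) / ((1 - (q : ℂ) ^ (n + 1)) / (1 - (q : ℂ))) *
      (NNc q (s + 1) i / qPochC (q : ℂ) (q : ℂ) i * (x * (q : ℂ)⁻¹) ^ i)) (s + 1)]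
  have hterm : ∀ k ∈ Finset.range (s + 1),
      NNc q (s + 1) (k + 1) / qPochC (q : ℂ) (q : ℂ) (k + 1) * x ^ (n + (k + 1) + 1) /
        ((1 - (q : ℂ) ^ (n + (k + 1) + 1)) / (1 - (q : ℂ)))
      = x ^ (n + 1) / ((1 - (q : ℂ) ^ (n + 1)) / (1 - (q : ℂ))) *
          (NNc q (s + 1) (k + 1) / qPochC (q : ℂ) (q : ℂ) (k + 1) * (x * (q : ℂ)⁻¹) ^ (k + 1))
        + ((q⁻¹ * qNum q (s + 1) / qNum q (n + 1) : ℝ) : ℂ) *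
          (NNc q s k / qPochC (q : ℂ) (q : ℂ) k * x ^ (n + 1 + k + 1) /
            ((1 - (q : ℂ) ^ (n + 1 + k + 1)) / (1 - (q : ℂ)))) := by
    intro k _
    have hP : qPochC (q : ℂ) (q : ℂ) k ≠ 0 := qPochC_QQ_ne hq hq1 k
    have h1 : (1 : ℂ) - (q : ℂ) ^ (k + 1) ≠ 0 := one_sub_cpow_ne hq hq1 (Nat.succ_ne_zero k)
    have h3 : (1 : ℂ) - (q : ℂ) ^ (n + 1) * (q : ℂ) ^ (k + 1) ≠ 0 := by
      have := one_sub_cpow_ne hq hq1 (m := (n + 1) + (k + 1)) (by omega)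
      rwa [pow_add] at this
    have e1 : n + (k + 1) + 1 = (n + 1) + (k + 1) := by omega
    have e2 : n + 1 + k + 1 = (n + 1) + (k + 1) := by omega
    rw [hC2, NNc_succ_left, qPochC_QQ_succ, e1, e2,
      pow_add (q : ℂ) (n + 1) (k + 1), pow_add x (n + 1) (k + 1), mul_pow x, inv_pow]
    generalize (q : ℂ) ^ (n + 1) = A at h2 h3
    generalize hBdef : (q : ℂ) ^ (k + 1) = B at h1 h3
    have hB0 : B ≠ 0 := by rw [← hBdef]; exact pow_ne_zero _ hQ
    have hkB : (q : ℂ) ^ k = B / q := by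
      rw [← hBdef, pow_succ]; field_simp
    rw [hkB]
    generalize (q : ℂ) ^ (s + 1) = C
    generalize NNc q s k = M
    generalize qPochC (q : ℂ) (q : ℂ) k = P at hP
    generalize x ^ (n + 1) = D
    generalize x ^ (k + 1) = E
    simp only [div_div_eq_mul_div, div_mul_eq_mul_div, mul_div_assoc',
      inv_eq_one_div, div_div]
    rw [div_add_div _ _
        (mul_ne_zero h2 (mul_ne_zero (mul_ne_zero hQ (mul_ne_zero hP h1)) hB0))
        (mul_ne_zero (mul_ne_zero hQ h2) (mul_ne_zero hP h3)),
      div_eq_div_iff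
        (mul_ne_zero (mul_ne_zero hQ (mul_ne_zero hP h1)) h3)
        (mul_ne_zero
          (mul_ne_zero h2 (mul_ne_zero (mul_ne_zero hQ (mul_ne_zero hP h1)) hB0))
          (mul_ne_zero (mul_ne_zero hQ h2) (mul_ne_zero hP h3)))]
    ring
  rw [Finset.sum_congr rfl hterm, Finset.sum_add_distrib]
  have h0 : NNc q (s + 1) 0 / qPochC (q : ℂ) (q : ℂ) 0 * x ^ (n + 0 + 1) /
        ((1 - (q : ℂ) ^ (n + 0 + 1)) / (1 - (q : ℂ)))
      = x ^ (n + 1) / ((1 - (q : ℂ) ^ (n + 1)) / (1 - (q : ℂ))) *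
          (NNc q (s + 1) 0 / qPochC (q : ℂ) (q : ℂ) 0 * (x * (q : ℂ)⁻¹) ^ 0) := by
    simp [NNc, qPochC]
  rw [h0]
  ring
end

section
/- For every real number q with 0 < q < 1 and all natural numbers n and r, the Jackson q-integral of t^n (t;q)_r over [0, q] evaluates in closed form as: ∫_0^q t^n ∏_{i=0}^{r−1}(1 − t q^i) d_q t = (−1)^n q^{n+1−(n+r)n+n(n−1)/2} (q;q)_n / ((n+r+1)_q · (q^{−(n+r)};q)_n). -/
namespace JacksonAux

variable {q : ℝ}

lemma powlt (hq0 : 0 < q) (hq1 : q < 1) (m : ℕ) (hm : 1 ≤ m) : q ^ m < 1 :=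
  pow_lt_one₀ hq0.le hq1 (by omega)

lemma ospp (hq0 : 0 < q) (hq1 : q < 1) (m : ℕ) (hm : 1 ≤ m) : 0 < 1 - q ^ m := by
  have := powlt hq0 hq1 m hm; linarith

lemma qPoch_pos (hq0 : 0 < q) (hq1 : q < 1) (n : ℕ) : 0 < qPoch q q n := by
  apply Finset.prod_pos
  intro i _
  have h : q * q ^ i = q ^ (i+1) := by ring
  rw [h]
  exact ospp hq0 hq1 _ (by omega)

def f (q : ℝ) (n r k : ℕ) : ℝ :=
  q ^ k * ((q * q ^ k) ^ n * ∏ i ∈ Finset.range r, (1 - q * q ^ k * q ^ i))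

lemma factor_mem (hq0 : 0 < q) (hq1 : q < 1) (k i : ℕ) :
    0 < 1 - q * q ^ k * q ^ i ∧ 1 - q * q ^ k * q ^ i ≤ 1 := by
  have h1 : q * q ^ k * q ^ i = q ^ (k + i + 1) := by ring
  have h2 : 0 < q ^ (k + i + 1) := pow_pos hq0 _
  have h3 : q ^ (k + i + 1) < 1 := powlt hq0 hq1 _ (by omega)
  constructor <;> rw [h1] <;> linarith

lemma f_nonneg (hq0 : 0 < q) (hq1 : q < 1) (n r k : ℕ) : 0 ≤ f q n r k := by
  unfold f
  apply mul_nonneg (pow_nonneg hq0.le _)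
  apply mul_nonneg (pow_nonneg (mul_nonneg hq0.le (pow_nonneg hq0.le _)) _)
  exact Finset.prod_nonneg fun i _ => (factor_mem hq0 hq1 k i).1.le

lemma f_le (hq0 : 0 < q) (hq1 : q < 1) (n r k : ℕ) : f q n r k ≤ q ^ k := by
  unfold f
  have hp : (∏ i ∈ Finset.range r, (1 - q * q ^ k * q ^ i)) ≤ 1 :=
    Finset.prod_le_one (fun i _ => (factor_mem hq0 hq1 k i).1.le)
      (fun i _ => (factor_mem hq0 hq1 k i).2)
  have hpn : 0 ≤ (∏ i ∈ Finset.range r, (1 - q * q ^ k * q ^ i)) :=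
    Finset.prod_nonneg fun i _ => (factor_mem hq0 hq1 k i).1.le
  have hq2 : (q * q ^ k) ^ n ≤ 1 := by
    apply pow_le_one₀ (mul_nonneg hq0.le (pow_nonneg hq0.le _))
    have h : q * q ^ k = q ^ (k+1) := by ring
    rw [h]
    exact (powlt hq0 hq1 _ (by omega)).le
  have hq2n : 0 ≤ (q * q ^ k) ^ n := pow_nonneg (mul_nonneg hq0.le (pow_nonneg hq0.le _)) _
  calc q ^ k * ((q * q ^ k) ^ n * ∏ i ∈ Finset.range r, (1 - q * q ^ k * q ^ i))
      ≤ q ^ k * (1 * 1) := by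
        apply mul_le_mul_of_nonneg_left _ (pow_nonneg hq0.le _)
        exact mul_le_mul hq2 hp hpn zero_le_one
    _ = q ^ k := by ring

lemma f_summable (hq0 : 0 < q) (hq1 : q < 1) (n r : ℕ) : Summable (f q n r) :=
  Summable.of_nonneg_of_le (f_nonneg hq0 hq1 n r) (f_le hq0 hq1 n r)
    (summable_geometric_of_lt_one hq0.le hq1)

lemma key (hq0 : 0 < q) (hq1 : q < 1) (r : ℕ) : ∀ n : ℕ, (∑' k : ℕ, f q n r k)
    = q ^ n * qPoch q q n * qPoch q q r / ((1 - q ^ (n + r + 1)) * qPoch q q (n + r)) := by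
  induction r with
  | zero =>
    intro n
    have h1 : ∀ k : ℕ, f q n 0 k = q ^ n * (q ^ (n+1)) ^ k := by
      intro k; unfold f; rw [Finset.prod_range_zero]; ring
    rw [tsum_congr h1, tsum_mul_left, tsum_geometric_of_lt_one (pow_nonneg hq0.le _)
      (powlt hq0 hq1 _ (by omega))]
    have h2 : (1 : ℝ) - q ^ (n + 0 + 1) ≠ 0 := (ospp hq0 hq1 _ (by omega)).ne'
    have h3 : qPoch q q n ≠ 0 := (qPoch_pos hq0 hq1 n).ne'
    unfold qPoch at *
    simp only [Nat.add_zero, Finset.prod_range_zero]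
    rw [show n + 0 + 1 = n + 1 by omega] at h2
    field_simp
  | succ r ih =>
    intro n
    have hpt : ∀ k : ℕ, f q n (r+1) k = f q n r k - q ^ r * f q (n+1) r k := by
      intro k; unfold f; rw [Finset.prod_range_succ]; ring
    rw [tsum_congr hpt, Summable.tsum_sub (f_summable hq0 hq1 n r)
      (Summable.mul_left _ (f_summable hq0 hq1 (n+1) r)), tsum_mul_left, ih n, ih (n+1)]
    have hA : qPoch q q n ≠ 0 := (qPoch_pos hq0 hq1 n).ne'
    have hB : qPoch q q r ≠ 0 := (qPoch_pos hq0 hq1 r).ne'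
    have hC : qPoch q q (n + r) ≠ 0 := (qPoch_pos hq0 hq1 _).ne'
    have h1 : (1:ℝ) - q ^ (n + r + 1) ≠ 0 := (ospp hq0 hq1 _ (by omega)).ne'
    have h2 : (1:ℝ) - q ^ (n + (r+1) + 1) ≠ 0 := (ospp hq0 hq1 _ (by omega)).ne'
    have e1 : qPoch q q (n + (r+1)) = qPoch q q (n + r) * (1 - q ^ (n + r + 1)) := by
      show qPoch q q ((n+r) + 1) = _
      unfold qPoch
      rw [Finset.prod_range_succ]
      congr 2
      rw [← pow_succ']
    have e2 : qPoch q q (r+1) = qPoch q q r * (1 - q ^ (r + 1)) := by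
      unfold qPoch
      rw [Finset.prod_range_succ]
      congr 2
      rw [← pow_succ']
    have e3 : qPoch q q (n+1) = qPoch q q n * (1 - q ^ (n + 1)) := by
      unfold qPoch
      rw [Finset.prod_range_succ]
      congr 2
      rw [← pow_succ']
    have e4 : (n + 1) + r + 1 = n + r + 2 := by omega
    have e5 : n + 1 + r = n + (r + 1) := by omega
    have e6 : n + (r + 1) + 1 = n + r + 2 := by omega
    have h2' : (1:ℝ) - q ^ (n + r + 2) ≠ 0 := by rw [← e6]; exact h2
    rw [e4, e5, e1, e2, e3, e6]
    have hX : ((1:ℝ) - q ^ (n + r + 1)) * qPoch q q (n + r) ≠ 0 := mul_ne_zero h1 hC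
    have hY : ((1:ℝ) - q ^ (n + r + 2)) * (qPoch q q (n + r) * (1 - q ^ (n + r + 1))) ≠ 0 :=
      mul_ne_zero h2' (mul_ne_zero hC h1)
    rw [mul_div_assoc' (q ^ r), div_sub_div _ _ hX hY, div_eq_div_iff (mul_ne_zero hX hY) hY]
    ring

lemma gauss (n : ℕ) : (∑ i ∈ Finset.range n, (i : ℤ)) * 2 = (n : ℤ) * ((n : ℤ) - 1) := by
  induction n with
  | zero => simp
  | succ m ihm => rw [Finset.sum_range_succ]; push_cast; push_cast at ihm; linarith

lemma zpow_prod (hq : q ≠ 0) (n : ℕ) (e : ℕ → ℤ) :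
    ∏ i ∈ Finset.range n, q ^ (e i) = q ^ (∑ i ∈ Finset.range n, e i) := by
  induction n with
  | zero => simp
  | succ m ih => rw [Finset.prod_range_succ, Finset.sum_range_succ, ih, zpow_add₀ hq]

end JacksonAux

/-- the Jackson q-integral of `t^n (t;q)_r` over `[0, q]`, namely
`(1−q)·q·Σ_{k=0}^∞ q^k · (q q^k)^n (q q^k; q)_r`, equals
`(−1)^n q^{n+1−(n+r)n+n(n−1)/2} (q;q)_n / ((n+r+1)_q · (q^{−(n+r)};q)_n)`. -/
theorem jackson_integral_closed_form (q : ℝ) (hq0 : 0 < q) (hq1 : q < 1) (n r : ℕ) :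
    (1 - q) * q *
        ∑' k : ℕ, q ^ k * ((q * q ^ k) ^ n * ∏ i ∈ Finset.range r, (1 - q * q ^ k * q ^ i))
      = (-1) ^ n *
          q ^ ((n : ℤ) + 1 - ((n : ℤ) + (r : ℤ)) * (n : ℤ) + (n : ℤ) * ((n : ℤ) - 1) / 2) *
          qPoch q q n /
          (qNum q (n + r + 1) * qPoch (q ^ (-((n : ℤ) + (r : ℤ)))) q n) := by
  open JacksonAux in
  have hqne : q ≠ 0 := hq0.ne'
  have hL : (∑' k : ℕ, q ^ k * ((q * q ^ k) ^ n *
        ∏ i ∈ Finset.range r, (1 - q * q ^ k * q ^ i)))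
      = q ^ n * qPoch q q n * qPoch q q r
        / ((1 - q ^ (n + r + 1)) * qPoch q q (n + r)) := JacksonAux.key hq0 hq1 r n
  rw [hL]
  have hsum2 : (∑ i ∈ Finset.range n, (i : ℤ)) * 2 = (n : ℤ) * ((n : ℤ) - 1) :=
    JacksonAux.gauss n
  set S : ℤ := ∑ i ∈ Finset.range n, (i : ℤ) with hS
  have hdiv : (n : ℤ) * ((n : ℤ) - 1) / 2 = S := by omega
  set m : ℕ := n + r with hm
  -- evaluate qPoch (q ^ (-(m:ℤ))) q n
  have hP : qPoch (q ^ (-((n : ℤ) + (r : ℤ)))) q n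
      = (-1) ^ n * q ^ (S - (n : ℤ) * (m : ℤ)) *
        ∏ i ∈ Finset.range n, (1 - q ^ (m - i)) := by
    unfold qPoch
    have hcast : -((n : ℤ) + (r : ℤ)) = -(m : ℤ) := by push_cast [hm]; ring
    rw [hcast]
    have step : ∀ i ∈ Finset.range n,
        (1 - q ^ (-(m:ℤ)) * q ^ i) = ((-1) * q ^ ((i:ℤ) - (m:ℤ))) * (1 - q ^ (m - i)) := by
      intro i hi
      have hi' : i < n := Finset.mem_range.mp hi
      have h1 : q ^ (-(m:ℤ)) * q ^ i = q ^ ((i:ℤ) - (m:ℤ)) := by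
        rw [← zpow_natCast q i, ← zpow_add₀ hqne]
        congr 1; ring
      have h2 : (q : ℝ) ^ (m - i) = (q ^ ((i:ℤ) - (m:ℤ)))⁻¹ := by
        rw [← zpow_natCast q (m - i), ← zpow_neg]
        congr 1
        omega
      have h3 : q ^ ((i:ℤ) - (m:ℤ)) ≠ 0 := zpow_ne_zero _ hqne
      rw [h1, h2]
      field_simp
      ring
    have hexp : (∑ i ∈ Finset.range n, ((i:ℤ) - (m:ℤ))) = S - (n : ℤ) * (m : ℤ) := by
      rw [Finset.sum_sub_distrib, Finset.sum_const, Finset.card_range, ← hS]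
      ring
    rw [Finset.prod_congr rfl step, Finset.prod_mul_distrib, Finset.prod_mul_distrib,
      Finset.prod_const, Finset.card_range, JacksonAux.zpow_prod hqne, hexp]
  -- the nat product relates to qPoch ratio
  have hProd : qPoch q q (r + n) = qPoch q q r * ∏ i ∈ Finset.range n, (1 - q ^ (m - i)) := by
    unfold qPoch
    rw [Finset.prod_range_add]
    congr 1
    rw [← Finset.prod_range_reflect]
    apply Finset.prod_congr rfl
    intro i hi
    have hi' : i < n := Finset.mem_range.mp hi
    have h : q * q ^ (r + (n - 1 - i)) = q ^ (m - i) := by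
      rw [← pow_succ']
      congr 1
      omega
    rw [h]
  have hmn : qPoch q q (n + r) = qPoch q q (r + n) := by rw [Nat.add_comm]
  -- exponent arithmetic: E = (n+1) + (S - n*m)
  have hE : ((n : ℤ) + 1 - ((n : ℤ) + (r : ℤ)) * (n : ℤ) + (n : ℤ) * ((n : ℤ) - 1) / 2)
      = ((n : ℤ) + 1) + (S - (n : ℤ) * (m : ℤ)) := by
    rw [hdiv]
    push_cast [hm]
    ring
  rw [hP, hE, hmn, hProd, qNum, zpow_add₀ hqne]
  have hzS : q ^ (S - (n : ℤ) * (m : ℤ)) ≠ 0 := zpow_ne_zero _ hqne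
  have hB : qPoch q q r ≠ 0 := (JacksonAux.qPoch_pos hq0 hq1 r).ne'
  have hD : (∏ i ∈ Finset.range n, (1 - q ^ (m - i))) ≠ 0 := by
    apply Finset.prod_ne_zero_iff.mpr
    intro i hi
    have hi' : i < n := Finset.mem_range.mp hi
    exact (JacksonAux.ospp hq0 hq1 (m - i) (by omega)).ne'
  have h1 : (1:ℝ) - q ^ (n + r + 1) ≠ 0 := (JacksonAux.ospp hq0 hq1 _ (by omega)).ne'
  have h1q : (1:ℝ) - q ≠ 0 := by linarith
  have hzn : (q : ℝ) ^ (((n : ℤ)) + 1) = q ^ (n + 1) := by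
    rw [← zpow_natCast q (n+1)]
    norm_num
  rw [hzn]
  field_simp
  try ring
end

section
/- For every real number q with q > 0 and q ≠ 1 and all natural numbers s and r, the following summation identity holds: Σ_{k=0}^{r} ((q^{−r};q)_k / (q;q)_k) · q^{s+k} / (s+k+1)_q = q^{sr+s+r} · (s)_q! (r)_q! / ((s+r)_q! · (s+r+1)_q). (This is the identity obtained from the paper's equation (5.7) by writing j+m = s and j−m = r.) -/
/-- The q-factorial `(n)_q! = ∏_{i=1}^{n} (i)_q`, with `(0)_q! = 1`. -/
noncomputable def qFact (q : ℝ) (n : ℕ) : ℝ := ∏ i ∈ Finset.range n, qNum q (i + 1)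

/-!
With `t = q^(s+1)` the `k`-th term is `(1 - q)/q · c_k · t q^k / (1 - t q^k)`, where
`c_k = (q^{-r};q)_k / (q;q)_k`. The sum `∑_k c_k t q^k / (1 - t q^k)` is the partial fraction
expansion of `t^(r+1) (q;q)_r / (t;q)_{r+1}`: both sides satisfy
`S_{r+1}(t) = S_r(t) - q^{-(r+1)} S_r(t q)`, the left one by the q-Pascal rule for the `c_k`, so they
agree by induction on `r` for all `t`. Finally `(t;q)_{r+1} = (q;q)_{s+r+1} / (q;q)_s`, and the
q-factorials are `(n)_q! = (q;q)_n / (1 - q)^n`.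
-/

section qPoch

variable (a q : ℝ)

@[simp]
lemma qPoch_zero : qPoch a q 0 = 1 := Finset.prod_range_zero _

lemma qPoch_succ (n : ℕ) : qPoch a q (n + 1) = qPoch a q n * (1 - a * q ^ n) :=
  Finset.prod_range_succ _ _

lemma qPoch_add (m n : ℕ) : qPoch a q (m + n) = qPoch a q m * qPoch (a * q ^ m) q n := by
  simp only [qPoch, Finset.prod_range_add, pow_add, mul_assoc]

lemma qPoch_succ' (n : ℕ) : qPoch a q (n + 1) = (1 - a) * qPoch (a * q) q n := by
  rw [add_comm, qPoch_add, pow_one, qPoch, Finset.prod_range_one, pow_zero, mul_one]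

variable {a q}

lemma qPoch_ne_zero_of_le {m n : ℕ} (h : qPoch a q n ≠ 0) (hmn : m ≤ n) : qPoch a q m ≠ 0 := by
  obtain ⟨d, rfl⟩ := Nat.exists_eq_add_of_le hmn
  exact left_ne_zero_of_mul (qPoch_add a q m d ▸ h)

lemma one_sub_pow_ne_zero (hq : 0 < q) (hq1 : q ≠ 1) {n : ℕ} (hn : n ≠ 0) : 1 - q ^ n ≠ 0 :=
  sub_ne_zero.2 fun h => hq1 ((pow_eq_one_iff_of_nonneg hq.le hn).1 h.symm)

lemma qPoch_self_ne_zero (hq : 0 < q) (hq1 : q ≠ 1) (n : ℕ) : qPoch q q n ≠ 0 :=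
  Finset.prod_ne_zero_iff.2 fun i _ => pow_succ' q i ▸ one_sub_pow_ne_zero hq hq1 i.succ_ne_zero

lemma qPoch_zpow_neg_self (hq : q ≠ 0) (r : ℕ) : qPoch (q ^ (-(r : ℤ))) q (r + 1) = 0 := by
  rw [qPoch_succ, zpow_neg, zpow_natCast, inv_mul_cancel₀ (pow_ne_zero r hq), sub_self, mul_zero]

end qPoch

lemma qFact_eq_qPoch_div (q : ℝ) (n : ℕ) : qFact q n = qPoch q q n / (1 - q) ^ n := by
  simp only [qFact, qPoch, qNum, pow_succ', div_eq_mul_inv, Finset.prod_mul_distrib,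
    Finset.prod_const, Finset.card_range, inv_pow]

lemma qFact_succ (q : ℝ) (n : ℕ) : qFact q (n + 1) = qFact q n * qNum q (n + 1) :=
  Finset.prod_range_succ _ _

/-- Equal to `(-1)^k q^{k(k-1)/2 - rk}` times the Gaussian binomial coefficient `[r choose k]_q`. -/
noncomputable def qPochRatio (q : ℝ) (r k : ℕ) : ℝ := qPoch (q ^ (-(r : ℤ))) q k / qPoch q q k

section qPochRatio

variable {q : ℝ}

@[simp]
lemma qPochRatio_zero_right (r : ℕ) : qPochRatio q r 0 = 1 := by
  simp [qPochRatio]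

lemma qPochRatio_succ_self (hq : q ≠ 0) (r : ℕ) : qPochRatio q r (r + 1) = 0 := by
  rw [qPochRatio, qPoch_zpow_neg_self hq, zero_div]

/-- The q-Pascal rule. -/
lemma qPochRatio_succ_succ (hq : q ≠ 0) {r k : ℕ} (hk : qPoch q q (k + 1) ≠ 0) :
    qPochRatio q (r + 1) (k + 1) = qPochRatio q r (k + 1) - (q ^ (r + 1))⁻¹ * qPochRatio q r k := by
  have hshift : q ^ (-((r + 1 : ℕ) : ℤ)) * q = q ^ (-(r : ℤ)) := by
    rw [← zpow_add_one₀ hq]; push_cast; ring_nf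
  have ha : q ^ (-((r + 1 : ℕ) : ℤ)) = (q ^ (r + 1))⁻¹ := by rw [zpow_neg, zpow_natCast]
  have hk' : qPoch q q k ≠ 0 := left_ne_zero_of_mul (qPoch_succ q q k ▸ hk)
  have hqk : 1 - q * q ^ k ≠ 0 := right_ne_zero_of_mul (qPoch_succ q q k ▸ hk)
  simp only [qPochRatio]
  rw [qPoch_succ q q k, qPoch_succ' _ q k, hshift, qPoch_succ (q ^ (-(r : ℤ))) q k, ← hshift, ha]
  field_simp
  ring

lemma sum_qPochRatio_succ (hq : q ≠ 0) {r : ℕ} (hr : qPoch q q (r + 1) ≠ 0) (f : ℕ → ℝ) :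
    ∑ k ∈ Finset.range (r + 2), qPochRatio q (r + 1) k * f k
      = ∑ k ∈ Finset.range (r + 1), qPochRatio q r k * f k
        - (q ^ (r + 1))⁻¹ * ∑ k ∈ Finset.range (r + 1), qPochRatio q r k * f (k + 1) := by
  have hpascal : ∀ k ∈ Finset.range (r + 1), qPochRatio q (r + 1) (k + 1) * f (k + 1)
      = qPochRatio q r (k + 1) * f (k + 1) - (q ^ (r + 1))⁻¹ * (qPochRatio q r k * f (k + 1)) := by
    intro k hk
    rw [qPochRatio_succ_succ hq (qPoch_ne_zero_of_le hr (by simpa using hk))]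
    ring
  have htop : ∑ k ∈ Finset.range (r + 1), qPochRatio q r k * f k
      = ∑ k ∈ Finset.range (r + 2), qPochRatio q r k * f k := by
    rw [Finset.sum_range_succ _ (r + 1), qPochRatio_succ_self hq, zero_mul, add_zero]
  rw [Finset.sum_range_succ', Finset.sum_congr rfl hpascal, Finset.sum_sub_distrib,
    ← Finset.mul_sum, htop, Finset.sum_range_succ' _ (r + 1)]
  simp only [qPochRatio_zero_right]
  ring

end qPochRatio

lemma pow_mul_qPoch_div_qPoch_sub {q t : ℝ} (hq : q ≠ 0) {r : ℕ} (ht : qPoch t q (r + 2) ≠ 0) :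
    t ^ (r + 1) * qPoch q q r / qPoch t q (r + 1)
        - (q ^ (r + 1))⁻¹ * ((t * q) ^ (r + 1) * qPoch q q r / qPoch (t * q) q (r + 1))
      = t ^ (r + 2) * qPoch q q (r + 1) / qPoch t q (r + 2) := by
  have hlast : qPoch t q (r + 2) = qPoch t q (r + 1) * (1 - t * q ^ (r + 1)) := qPoch_succ t q _
  have hfirst : qPoch t q (r + 2) = (1 - t) * qPoch (t * q) q (r + 1) := qPoch_succ' t q _
  have h2 : 1 - t * q ^ (r + 1) ≠ 0 := right_ne_zero_of_mul (hlast ▸ ht)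
  have h3 : 1 - t ≠ 0 := left_ne_zero_of_mul (hfirst ▸ ht)
  have e2 : qPoch t q (r + 1) = qPoch t q (r + 2) / (1 - t * q ^ (r + 1)) := by
    rw [hlast, mul_div_cancel_right₀ _ h2]
  have e1 : qPoch (t * q) q (r + 1) = qPoch t q (r + 2) / (1 - t) := by
    rw [hfirst, mul_div_cancel_left₀ _ h3]
  have hq' : q ^ (r + 1) ≠ 0 := pow_ne_zero _ hq
  rw [e1, e2, qPoch_succ q q r]
  field_simp
  ring

theorem sum_qPochRatio_mul_div {q : ℝ} (hq : q ≠ 0) {r : ℕ} (hr : qPoch q q r ≠ 0) {t : ℝ}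
    (ht : qPoch t q (r + 1) ≠ 0) :
    ∑ k ∈ Finset.range (r + 1), qPochRatio q r k * (t * q ^ k / (1 - t * q ^ k))
      = t ^ (r + 1) * qPoch q q r / qPoch t q (r + 1) := by
  induction r generalizing t with
  | zero => simp [qPoch]
  | succ r ih =>
    have hr' : qPoch q q r ≠ 0 := qPoch_ne_zero_of_le hr r.le_succ
    have hfirst : qPoch t q (r + 2) = (1 - t) * qPoch (t * q) q (r + 1) := qPoch_succ' t q _
    have hshift : ∀ k, t * q ^ (k + 1) = t * q * q ^ k := fun k => by ring
    rw [sum_qPochRatio_succ hq hr, ih hr' (qPoch_ne_zero_of_le ht (by omega))]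
    simp only [hshift]
    rw [ih hr' (right_ne_zero_of_mul (hfirst ▸ ht)), pow_mul_qPoch_div_qPoch_sub hq ht]

/-- the summation identity
`Σ_{k=0}^{r} ((q^{−r};q)_k/(q;q)_k) · q^{s+k}/(s+k+1)_q
  = q^{sr+s+r} (s)_q! (r)_q! / ((s+r)_q! (s+r+1)_q)`. -/
theorem q_sum_identity_factorial (q : ℝ) (hq : 0 < q) (hq1 : q ≠ 1) (s r : ℕ) :
    ∑ k ∈ Finset.range (r + 1),
        (qPoch (q ^ (-(r : ℤ))) q k / qPoch q q k) * q ^ (s + k) / qNum q (s + k + 1)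
      = q ^ (s * r + s + r) * (qFact q s * qFact q r) /
          (qFact q (s + r) * qNum q (s + r + 1)) := by
  have hpoch := qPoch_self_ne_zero hq hq1
  have hsplit : qPoch q q (s + r + 1) = qPoch q q s * qPoch (q ^ (s + 1)) q (r + 1) := by
    rw [add_assoc, qPoch_add, ← pow_succ']
  have htail : qPoch (q ^ (s + 1)) q (r + 1) = qPoch q q (s + r + 1) / qPoch q q s := by
    rw [hsplit, mul_div_cancel_left₀ _ (hpoch s)]
  have hterm : ∀ k ∈ Finset.range (r + 1),
      qPoch (q ^ (-(r : ℤ))) q k / qPoch q q k * q ^ (s + k) / qNum q (s + k + 1)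
        = (1 - q) / q * (qPochRatio q r k * (q ^ (s + 1) * q ^ k / (1 - q ^ (s + 1) * q ^ k))) := by
    intro k _
    have hk := one_sub_pow_ne_zero hq hq1 (s + k).succ_ne_zero
    rw [qNum, qPochRatio, ← pow_add, show s + 1 + k = s + k + 1 by ring]
    field_simp
    ring
  rw [Finset.sum_congr rfl hterm, ← Finset.mul_sum,
    sum_qPochRatio_mul_div hq.ne' (hpoch r) (right_ne_zero_of_mul (hsplit ▸ hpoch _)),
    ← qFact_succ, qFact_eq_qPoch_div, qFact_eq_qPoch_div, qFact_eq_qPoch_div,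
    htail]
  have hs := hpoch s
  have hsr := hpoch (s + r + 1)
  have h1q := sub_ne_zero.2 hq1.symm
  field_simp
  ring
end

section
/- For every real number q with q > 0 and q ≠ 1, every natural number N, and every real number ζ such that q^{−2N+2k} ζ ≠ 1 for all 0 ≤ k ≤ N−1, one has [∏_{i=1}^{N}(1 − q^{−2i} ζ)] · Σ_{n=0}^{N} (−1)^n q^{n(n−1)} (q^{−2N};q^2)_n ζ^n / ((q^2;q^2)_n · (q^{−2N}ζ;q^2)_n) = 1. (With N = 2j and ζ the real central element −q b c of SU_q(2), this identity is the scalar content of the statement that the SU_q(2) coherent state |x,z⟩ of spin j has unit norm, ⟨x,z|x,z⟩ = 1.) -/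
namespace CSUN
noncomputable def qb (t : ℝ) : ℕ → ℕ → ℝ
  | 0, 0 => 1
  | 0, _ + 1 => 0
  | _ + 1, 0 => 1
  | N + 1, n + 1 => t ^ (n + 1) * qb t N (n + 1) + qb t N n
lemma qb_zero_right (t : ℝ) (N : ℕ) : qb t N 0 = 1 := by cases N <;> rfl
lemma qb_succ_succ (t : ℝ) (N n : ℕ) :
    qb t (N + 1) (n + 1) = t ^ (n + 1) * qb t N (n + 1) + qb t N n := rfl
lemma qb_eq_zero (t : ℝ) : ∀ {N n : ℕ}, N < n → qb t N n = 0 := by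
  intro N
  induction N with
  | zero => intro n h; match n, h with | m + 1, _ => rfl
  | succ N ih =>
    intro n h
    match n, h with
    | m + 1, h => rw [qb_succ_succ, ih (by omega), ih (by omega)]; ring
lemma qPoch_succ (a q : ℝ) (n : ℕ) :
    qPoch a q (n + 1) = qPoch a q n * (1 - a * q ^ n) := Finset.prod_range_succ _ _

lemma qb_mul (t : ℝ) : ∀ N n : ℕ, n ≤ N →
    qb t N n * (qPoch t t n * qPoch t t (N - n)) = qPoch t t N := by
  intro N
  induction N with
  | zero =>
    intro n h
    obtain rfl : n = 0 := by omega
    simp [qb_zero_right, qPoch]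
  | succ N ih =>
    intro n h
    match n with
    | 0 => simp [qb_zero_right, qPoch]
    | m + 1 =>
      rw [qb_succ_succ]
      obtain ⟨k, rfl⟩ : ∃ k, N = m + k := ⟨N - m, by omega⟩
      rcases Nat.eq_zero_or_pos k with rfl | hk
      · -- n = m + 1 = N + 1 case,  N = m
        rw [qb_eq_zero t (by omega : m + 0 < m + 1)]
        have I := ih m (by omega)
        simp only [Nat.add_zero] at *
        simp only [Nat.sub_self] at I ⊢
        have h0 : qPoch t t 0 = 1 := rfl
        rw [h0, qPoch_succ t t m]
        rw [h0] at I
        linear_combination (1 - t * t ^ m) * I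
      · obtain ⟨l, rfl⟩ : ∃ l, k = l + 1 := ⟨k - 1, by omega⟩
        -- N = m + l + 1, n = m + 1 ≤ N
        have I1 := ih (m + 1) (by omega)
        have I2 := ih m (by omega)
        rw [show m + (l + 1) - (m + 1) = l by omega] at I1
        rw [show m + (l + 1) - m = l + 1 by omega, qPoch_succ t t l] at I2
        rw [show m + (l + 1) + 1 - (m + 1) = l + 1 by omega]
        rw [qPoch_succ t t l, qPoch_succ t t (m + (l + 1)), qPoch_succ t t m]
        rw [qPoch_succ t t m] at I1
        linear_combination (t ^ (m + 1) * (1 - t * t ^ l)) * I1 + (1 - t * t ^ m) * I2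

lemma signProd (q : ℝ) (n : ℕ) :
    ∏ i ∈ Finset.range n, (-(q ^ 2) ^ i) = (-1) ^ n * q ^ (n * (n - 1)) := by
  induction n with
  | zero => simp
  | succ n ih =>
    rw [Finset.prod_range_succ, ih]
    match n with
    | 0 => simp
    | m + 1 =>
      simp only [Nat.add_sub_cancel]
      rw [show (m + 1 + 1) * (m + 1) = (m + 1) * m + 2 * (m + 1) by ring, pow_add]
      ring

lemma rel (q : ℝ) (hq : q ≠ 0) (N : ℕ) : ∀ n : ℕ, n ≤ N →
    qPoch (((q ^ 2)⁻¹) ^ N) (q ^ 2) n * qPoch (q ^ 2) (q ^ 2) (N - n) * (q ^ 2) ^ (N * n)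
      = (∏ i ∈ Finset.range n, (-(q ^ 2) ^ i)) * qPoch (q ^ 2) (q ^ 2) N := by
  intro n
  induction n with
  | zero => simp [qPoch]
  | succ n ih =>
    intro h
    obtain ⟨k, rfl⟩ : ∃ k, N = n + k + 1 := ⟨N - n - 1, by omega⟩
    have I := ih (by omega)
    rw [show n + k + 1 - n = k + 1 by omega, qPoch_succ] at I
    rw [qPoch_succ, show n + k + 1 - (n + 1) = k by omega, Finset.prod_range_succ]
    have haN : ((q ^ 2 : ℝ)⁻¹) ^ (n + k + 1) * (q ^ 2) ^ (n + k + 1) = 1 := by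
      rw [← mul_pow, inv_mul_cancel₀ (pow_ne_zero 2 hq), one_pow]
    linear_combination (-(((q ^ 2 : ℝ)⁻¹) ^ (n + k + 1)) * (q ^ 2) ^ n * (q ^ 2) ^ (n + k + 1)) * I
      - (qPoch (((q ^ 2 : ℝ)⁻¹) ^ (n + k + 1)) (q ^ 2) n * qPoch (q ^ 2) (q ^ 2) k *
            (q ^ 2) ^ ((n + k + 1) * n) * (q ^ 2) ^ (n + k + 1)
          + (q ^ 2) ^ n * (∏ i ∈ Finset.range n, (-(q ^ 2 : ℝ) ^ i)) *
            qPoch (q ^ 2) (q ^ 2) (n + k + 1)) * haN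

lemma key (N : ℕ) : ∀ w t : ℝ,
    ∑ n ∈ Finset.range (N + 1), qb t N n * t ^ (n * (n - 1)) * w ^ n *
      ∏ j ∈ Finset.Ico n N, (1 - w * t ^ j) = 1 := by
  induction N with
  | zero => intro w t; simp [qb]
  | succ N ih =>
    intro w t
    have h1 : ∀ n ∈ Finset.range (N + 2),
        qb t (N + 1) n * t ^ (n * (n - 1)) * w ^ n * ∏ j ∈ Finset.Ico n (N + 1), (1 - w * t ^ j)
        = (t ^ n * qb t N n) * t ^ (n * (n - 1)) * w ^ n *
            (∏ j ∈ Finset.Ico n (N + 1), (1 - w * t ^ j)) +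
          (if n = 0 then 0 else qb t N (n - 1)) * t ^ (n * (n - 1)) * w ^ n *
            (∏ j ∈ Finset.Ico n (N + 1), (1 - w * t ^ j)) := by
      intro n _
      match n with
      | 0 => simp [qb_zero_right]
      | m + 1 => rw [qb_succ_succ]; simp; ring
    rw [Finset.sum_congr rfl h1, Finset.sum_add_distrib]
    rw [Finset.sum_range_succ (fun n => (t ^ n * qb t N n) * t ^ (n * (n - 1)) * w ^ n *
            (∏ j ∈ Finset.Ico n (N + 1), (1 - w * t ^ j)))]
    rw [qb_eq_zero t (by omega : N < N + 1)]
    rw [Finset.sum_range_succ' (fun n => (if n = 0 then 0 else qb t N (n - 1)) * t ^ (n * (n - 1)) * w ^ n *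
            (∏ j ∈ Finset.Ico n (N + 1), (1 - w * t ^ j)))]
    simp only [mul_zero, zero_mul, add_zero, if_true, if_neg (Nat.succ_ne_zero _), Nat.add_sub_cancel]
    rw [← Finset.sum_add_distrib]
    have h2 : ∀ n ∈ Finset.range (N + 1),
        t ^ n * qb t N n * t ^ (n * (n - 1)) * w ^ n *
            (∏ j ∈ Finset.Ico n (N + 1), (1 - w * t ^ j)) +
          qb t N n * t ^ ((n + 1) * n) * w ^ (n + 1) *
            (∏ j ∈ Finset.Ico (n + 1) (N + 1), (1 - w * t ^ j))
        = qb t N n * t ^ (n * (n - 1)) * (t * w) ^ n *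
            ∏ j ∈ Finset.Ico n N, (1 - t * w * t ^ j) := by
      intro n hn
      have hnN : n < N + 1 := Finset.mem_range.mp hn
      rw [Finset.prod_eq_prod_Ico_succ_bot hnN]
      have hP : (∏ j ∈ Finset.Ico (n + 1) (N + 1), (1 - w * t ^ j))
          = ∏ j ∈ Finset.Ico n N, (1 - t * w * t ^ j) := by
        rw [Finset.prod_Ico_eq_prod_range, Finset.prod_Ico_eq_prod_range]
        have hN : N + 1 - (n + 1) = N - n := by omega
        rw [hN]
        apply Finset.prod_congr rfl
        intro i _
        have : n + 1 + i = (n + i) + 1 := by omega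
        rw [this, pow_succ]
        ring
      rw [hP]
      match n with
      | 0 => simp; ring
      | m + 1 =>
        simp only [Nat.add_sub_cancel]
        ring
    rw [Finset.sum_congr rfl h2]
    exact ih (t * w) t


lemma pow_ne_one (q : ℝ) (hq : 0 < q) (hq1 : q ≠ 1) {m : ℕ} (hm : m ≠ 0) : q ^ m ≠ 1 := by
  rcases lt_trichotomy q 1 with h | h | h
  · exact ne_of_lt (pow_lt_one₀ hq.le h hm)
  · exact absurd h hq1
  · exact ne_of_gt (one_lt_pow₀ h hm)

lemma hPt_ne (q : ℝ) (hq : 0 < q) (hq1 : q ≠ 1) (m : ℕ) : qPoch (q ^ 2) (q ^ 2) m ≠ 0 := by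
  rw [qPoch]
  apply Finset.prod_ne_zero_iff.mpr
  intro i _
  have : (q ^ 2 : ℝ) * (q ^ 2) ^ i = q ^ (2 * (i + 1)) := by
    rw [pow_mul]; ring
  rw [this]
  intro hc
  rw [sub_eq_zero] at hc
  exact pow_ne_one q hq hq1 (by omega) hc.symm

end CSUN

open CSUN

/-- with `N = 2j` and `ζ` the real central element `−q b c` of `SU_q(2)`,
`[∏_{i=1}^{N}(1 − q^{−2i} ζ)] · Σ_{n=0}^{N} (−1)^n q^{n(n−1)} (q^{−2N};q^2)_n ζ^n /
 ((q^2;q^2)_n (q^{−2N}ζ;q^2)_n) = 1`: the coherent state `|x,z⟩` has unit norm. -/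
theorem coherent_state_unit_norm (q : ℝ) (hq : 0 < q) (hq1 : q ≠ 1) (N : ℕ) (ζ : ℝ)
    (hζ : ∀ k : ℕ, k < N → q ^ (-2 * (N : ℤ) + 2 * (k : ℤ)) * ζ ≠ 1) :
    (∏ i ∈ Finset.range N, (1 - q ^ (-2 * ((i : ℤ) + 1)) * ζ)) *
        ∑ n ∈ Finset.range (N + 1),
          (-1) ^ n * q ^ (n * (n - 1)) *
            qPoch (q ^ (-2 * (N : ℤ))) (q ^ 2) n * ζ ^ n /
            (qPoch (q ^ 2) (q ^ 2) n * qPoch (q ^ (-2 * (N : ℤ)) * ζ) (q ^ 2) n)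
      = 1 := by
  have hq0 : q ≠ 0 := ne_of_gt hq
  have ht0 : (q : ℝ) ^ 2 ≠ 0 := pow_ne_zero _ hq0
  have hXrw : q ^ (-2 * (N : ℤ)) = ((q ^ 2 : ℝ)⁻¹) ^ N := by
    rw [inv_pow, ← pow_mul]
    rw [show (-2 * (N : ℤ)) = -((2 * N : ℕ) : ℤ) by push_cast; ring]
    rw [zpow_neg, zpow_natCast]
  have hwt : ∀ i : ℕ, ((q ^ 2 : ℝ)⁻¹) ^ N * ζ * (q ^ 2) ^ i = q ^ (-2 * (N : ℤ) + 2 * (i : ℤ)) * ζ := by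
    intro i
    rw [zpow_add₀ hq0, ← hXrw]
    rw [show ((2 : ℤ) * (i : ℤ)) = ((2 * i : ℕ) : ℤ) by push_cast; ring, zpow_natCast, pow_mul]
    ring
  have hPw : ∀ m : ℕ, m ≤ N → qPoch (((q ^ 2 : ℝ)⁻¹) ^ N * ζ) (q ^ 2) m ≠ 0 := by
    intro m hm
    rw [qPoch]
    apply Finset.prod_ne_zero_iff.mpr
    intro i hi
    have hiN : i < N := lt_of_lt_of_le (Finset.mem_range.mp hi) hm
    rw [hwt i]
    intro hc
    rw [sub_eq_zero] at hc
    exact hζ i hiN hc.symm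
  rw [hXrw]
  have hprod : (∏ i ∈ Finset.range N, (1 - q ^ (-2 * ((i : ℤ) + 1)) * ζ))
      = qPoch (((q ^ 2 : ℝ)⁻¹) ^ N * ζ) (q ^ 2) N := by
    rw [qPoch, ← Finset.prod_range_reflect]
    apply Finset.prod_congr rfl
    intro i hi
    have hiN : i < N := Finset.mem_range.mp hi
    rw [hwt i]
    have he : (-2 * (((N - 1 - i : ℕ) : ℤ) + 1)) = -2 * (N : ℤ) + 2 * (i : ℤ) := by omega
    rw [he]
  rw [hprod, Finset.mul_sum]
  have hterm : ∀ n ∈ Finset.range (N + 1),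
      qPoch (((q ^ 2 : ℝ)⁻¹) ^ N * ζ) (q ^ 2) N *
        ((-1) ^ n * q ^ (n * (n - 1)) * qPoch (((q ^ 2 : ℝ)⁻¹) ^ N) (q ^ 2) n * ζ ^ n /
          (qPoch (q ^ 2) (q ^ 2) n * qPoch (((q ^ 2 : ℝ)⁻¹) ^ N * ζ) (q ^ 2) n))
      = qb (q ^ 2) N n * (q ^ 2) ^ (n * (n - 1)) * (((q ^ 2 : ℝ)⁻¹) ^ N * ζ) ^ n *
          ∏ j ∈ Finset.Ico n N, (1 - ((q ^ 2 : ℝ)⁻¹) ^ N * ζ * (q ^ 2) ^ j) := by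
    intro n hn
    have hnN : n ≤ N := by have := Finset.mem_range.mp hn; omega
    have hsplit : qPoch (((q ^ 2 : ℝ)⁻¹) ^ N * ζ) (q ^ 2) N
        = qPoch (((q ^ 2 : ℝ)⁻¹) ^ N * ζ) (q ^ 2) n *
            ∏ j ∈ Finset.Ico n N, (1 - ((q ^ 2 : ℝ)⁻¹) ^ N * ζ * (q ^ 2) ^ j) := by
      rw [qPoch, qPoch]
      exact (Finset.prod_range_mul_prod_Ico _ hnN).symm
    have hrel := rel q hq0 N n hnN
    have hqbm := qb_mul (q ^ 2) N n hnN
    have hC2 : (∏ i ∈ Finset.range n, (-(q ^ 2 : ℝ) ^ i)) * (∏ i ∈ Finset.range n, (-(q ^ 2 : ℝ) ^ i))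
        = (q ^ 2) ^ (n * (n - 1)) := by
      rw [signProd, ← pow_mul q 2 (n * (n - 1)), mul_mul_mul_comm, ← pow_add, ← pow_add,
        show n + n = 2 * n by ring, show n * (n - 1) + n * (n - 1) = 2 * (n * (n - 1)) by ring,
        pow_mul, pow_mul]
      norm_num
    have hXn : (((q ^ 2 : ℝ)⁻¹) ^ N) ^ n * (q ^ 2) ^ (N * n) = 1 := by
      rw [pow_mul, ← mul_pow, ← mul_pow, inv_mul_cancel₀ ht0, one_pow, one_pow]
    rw [hsplit, ← signProd]
    rw [mul_div_assoc']
    rw [div_eq_iff (mul_ne_zero (hPt_ne q hq hq1 n) (hPw n hnN))]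
    apply mul_left_cancel₀
      (mul_ne_zero (hPt_ne q hq hq1 (N - n)) (pow_ne_zero (N * n) ht0))
    linear_combination
      (qPoch (((q ^ 2 : ℝ)⁻¹) ^ N * ζ) (q ^ 2) n *
        (∏ j ∈ Finset.Ico n N, (1 - ((q ^ 2 : ℝ)⁻¹) ^ N * ζ * (q ^ 2) ^ j)) *
        (∏ i ∈ Finset.range n, (-(q ^ 2 : ℝ) ^ i)) * ζ ^ n) * hrel
      + (qPoch (((q ^ 2 : ℝ)⁻¹) ^ N * ζ) (q ^ 2) n *
        (∏ j ∈ Finset.Ico n N, (1 - ((q ^ 2 : ℝ)⁻¹) ^ N * ζ * (q ^ 2) ^ j)) *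
        ζ ^ n * qPoch (q ^ 2) (q ^ 2) N) * hC2
      + (-((q ^ 2 : ℝ) ^ (n * (n - 1))) * (((q ^ 2 : ℝ)⁻¹) ^ N) ^ n * ζ ^ n *
        (∏ j ∈ Finset.Ico n N, (1 - ((q ^ 2 : ℝ)⁻¹) ^ N * ζ * (q ^ 2) ^ j)) *
        qPoch (((q ^ 2 : ℝ)⁻¹) ^ N * ζ) (q ^ 2) n * (q ^ 2) ^ (N * n)) * hqbm
      + (-((q ^ 2 : ℝ) ^ (n * (n - 1))) * ζ ^ n *
        (∏ j ∈ Finset.Ico n N, (1 - ((q ^ 2 : ℝ)⁻¹) ^ N * ζ * (q ^ 2) ^ j)) *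
        qPoch (((q ^ 2 : ℝ)⁻¹) ^ N * ζ) (q ^ 2) n * qPoch (q ^ 2) (q ^ 2) N) * hXn
  rw [Finset.sum_congr rfl hterm]
  exact key N (((q ^ 2 : ℝ)⁻¹) ^ N * ζ) (q ^ 2)
end

section
/- Let q be a positive real number and let A_q be the unital associative ℂ-algebra presented by generators x, y, u, v and relations x y = y x, u v = v u = 1, x u = q u x, y u = q u y, x v = q^{−1} v x, y v = q^{−1} v y. Then the elements a := u + x v y, b := q^{1/2} x v, c := q^{−1/2} v y, d := v satisfy the defining relations of the quantum group SL_q(2,ℂ): a b = q^{−1} b a, a c = q^{−1} c a, b d = q^{−1} d b, c d = q^{−1} d c, b c = c b, a d − d a = (q^{−1} − q) b c, and a d − q^{−1} b c = 1. -/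
/-- In any unital associative ℂ-algebra with elements `x, y, u, v`
satisfying the relations of the dual (function) algebra of `U_q[su(2)]`
(`u = e^{z/2}`, `v = e^{−z/2}`), i.e. `xy = yx`, `uv = vu = 1`, `xu = q ux`,
`yu = q uy`, `xv = q⁻¹ vx`, `yv = q⁻¹ vy`, the Gauss-decomposition entries
`a = u + xvy`, `b = q^{1/2} xv`, `c = q^{−1/2} vy`, `d = v` satisfy the
defining relations of the quantum group `SL_q(2,ℂ)`. -/
theorem gauss_decomposition_SLq2 (q : ℝ) (hq : 0 < q)
    (A : Type*) [Ring A] [Algebra ℂ A]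
    (x y u v : A)
    (hxy : x * y = y * x)
    (huv : u * v = 1) (hvu : v * u = 1)
    (hxu : x * u = (q : ℂ) • (u * x))
    (hyu : y * u = (q : ℂ) • (u * y))
    (hxv : x * v = ((q : ℂ))⁻¹ • (v * x))
    (hyv : y * v = ((q : ℂ))⁻¹ • (v * y))
    (a b c d : A)
    (ha : a = u + x * v * y)
    (hb : b = ((Real.sqrt q : ℂ)) • (x * v))
    (hc : c = ((Real.sqrt q : ℂ))⁻¹ • (v * y))
    (hd : d = v) :
    a * b = ((q : ℂ))⁻¹ • (b * a) ∧
    a * c = ((q : ℂ))⁻¹ • (c * a) ∧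
    b * d = ((q : ℂ))⁻¹ • (d * b) ∧
    c * d = ((q : ℂ))⁻¹ • (d * c) ∧
    b * c = c * b ∧
    a * d - d * a = (((q : ℂ))⁻¹ - (q : ℂ)) • (b * c) ∧
    a * d - ((q : ℂ))⁻¹ • (b * c) = 1 := by
  have hQ : (q : ℂ) ≠ 0 := by exact_mod_cast hq.ne'
  have hs : ((Real.sqrt q : ℂ)) ≠ 0 := by
    exact_mod_cast (Real.sqrt_pos.mpr hq).ne'
  have hvx : v * x = (q : ℂ) • (x * v) := by
    rw [hxv, smul_smul, mul_inv_cancel₀ hQ, one_smul]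
  have hvy : v * y = (q : ℂ) • (y * v) := by
    rw [hyv, smul_smul, mul_inv_cancel₀ hQ, one_smul]
  have hux : u * x = ((q : ℂ))⁻¹ • (x * u) := by
    rw [hxu, smul_smul, inv_mul_cancel₀ hQ, one_smul]
  have huy : u * y = ((q : ℂ))⁻¹ • (y * u) := by
    rw [hyu, smul_smul, inv_mul_cancel₀ hQ, one_smul]
  have hyx : y * x = x * y := hxy.symm
  have hss : ((Real.sqrt q : ℂ)) * ((Real.sqrt q : ℂ)) = (q : ℂ) := by
    exact_mod_cast Real.mul_self_sqrt hq.le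
  have Hvx : ∀ w : A, v * (x * w) = (q : ℂ) • (x * (v * w)) := fun w => by
    rw [← mul_assoc, hvx, smul_mul_assoc, mul_assoc]
  have Hux : ∀ w : A, u * (x * w) = ((q : ℂ))⁻¹ • (x * (u * w)) := fun w => by
    rw [← mul_assoc, hux, smul_mul_assoc, mul_assoc]
  have Hyx : ∀ w : A, y * (x * w) = x * (y * w) := fun w => by
    rw [← mul_assoc, hyx, mul_assoc]
  have Hyv : ∀ w : A, y * (v * w) = ((q : ℂ))⁻¹ • (v * (y * w)) := fun w => by
    rw [← mul_assoc, hyv, smul_mul_assoc, mul_assoc]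
  have Hyu : ∀ w : A, y * (u * w) = (q : ℂ) • (u * (y * w)) := fun w => by
    rw [← mul_assoc, hyu, smul_mul_assoc, mul_assoc]
  have Huv : ∀ w : A, u * (v * w) = w := fun w => by
    rw [← mul_assoc, huv, one_mul]
  have Hvu : ∀ w : A, v * (u * w) = w := fun w => by
    rw [← mul_assoc, hvu, one_mul]
  subst ha hb hc hd
  refine ⟨?_, ?_, ?_, ?_, ?_, ?_, ?_⟩ <;>
  · simp only [mul_add, add_mul, mul_sub, sub_mul, smul_add, smul_sub,
      mul_assoc, smul_mul_assoc, mul_smul_comm, smul_smul,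
      hvx, hux, hyx, hyv, hyu, huv, hvu,
      Hvx, Hux, Hyx, Hyv, Hyu, Huv, Hvu, mul_one, one_mul]
    match_scalars <;> (try rw [← hss]) <;> field_simp <;> try ring
end

section
/- Let q be a real number with q > 0, q ≠ 1, let N be a natural number and set j = N/2. Let V be the ℂ-vector space with basis X^0, X^1, …, X^N, and define linear operators on V by: J_0 X^s = (s − j) X^s; J_− X^0 = 0 and J_− X^s = (s)_{q^2} q^{N−s−1/2} X^{s−1} for 1 ≤ s ≤ N; J_+ X^s = q^{3/2−N+s} (N−s)_{q^2} X^{s+1} for 0 ≤ s ≤ N−1 and J_+ X^N = 0. For each integer s with 0 ≤ s ≤ N write m = s − j and set Ψ_m = q^{−j(j+m)−(j−m)} ([N choose j+m]_q)^{1/2} X^{j+m}. Then J_0 Ψ_m = m Ψ_m, J_+ Ψ_m = √((j−m)_{q^2} (j+m+1)_{q^2}) Ψ_{m+1} (for m < j), and J_− Ψ_m = √((j+m)_{q^2} (j−m+1)_{q^2}) Ψ_{m−1} (for m > −j). In other words, the operators J_0 = x∂ − j, J_− = D_{q^2} q^{−1/2+j−J_0}, J_+ = ((2j)_{q^2} x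 − x^2 D_{q^2}) q^{3/2−3j−J_0} realize the spin-j representation of U_q[su(2)] on the monomials Ψ_m. -/
/-- The symmetric q-integer `[m]_q = (q^m − q^{−m})/(q − q^{−1})`. -/
noncomputable def qIntSym (q : ℝ) (m : ℕ) : ℝ := (q ^ (m : ℤ) - q ^ (-(m : ℤ))) / (q - q⁻¹)

/-- The symmetric q-factorial `[n]_q! = ∏_{i=1}^{n} [i]_q`. -/
noncomputable def qFactSym (q : ℝ) (n : ℕ) : ℝ := ∏ i ∈ Finset.range n, qIntSym q (i + 1)

/-- The q-binomial coefficient `[m choose k]_q = [m]_q!/([k]_q! [m−k]_q!)`. -/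
noncomputable def qBinomSym (q : ℝ) (m k : ℕ) : ℝ :=
  qFactSym q m / (qFactSym q k * qFactSym q (m - k))

lemma qNum_eq_sum {p : ℝ} (hp1 : p ≠ 1) (n : ℕ) : qNum p n = ∑ i ∈ Finset.range n, p ^ i := by
  rw [geom_sum_eq hp1, qNum, div_eq_div_iff (sub_ne_zero.mpr (Ne.symm hp1)) (sub_ne_zero.mpr hp1)]
  ring

lemma qNum_pos {p : ℝ} (hp : 0 < p) (hp1 : p ≠ 1) {n : ℕ} (hn : 0 < n) : 0 < qNum p n := by
  rw [qNum_eq_sum hp1]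
  exact Finset.sum_pos (fun i _ => pow_pos hp i) (Finset.nonempty_range_iff.mpr hn.ne')

lemma sq_ne_one {q : ℝ} (hq : 0 < q) (hq1 : q ≠ 1) : q ^ 2 ≠ 1 := by
  intro h
  have h2 : (q - 1) * (q + 1) = 0 := by nlinarith
  rcases mul_eq_zero.mp h2 with h3 | h3
  · exact hq1 (by linarith)
  · linarith

lemma qIntSym_qNum {q : ℝ} (hq : 0 < q) (hq1 : q ≠ 1) (n : ℕ) :
    qIntSym q n = q ^ (1 - (n : ℝ)) * qNum (q ^ 2) n := by
  have hq0 : q ≠ 0 := hq.ne'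
  have h1 : (1 : ℝ) - (n : ℝ) = ((1 - (n : ℤ) : ℤ) : ℝ) := by push_cast; ring
  rw [h1, Real.rpow_intCast]
  have hd : q - q⁻¹ ≠ 0 := by
    rw [sub_ne_zero]
    intro h
    have : q ^ 2 = 1 := by field_simp at h; nlinarith
    exact sq_ne_one hq hq1 this
  have hd2 : 1 - q ^ 2 ≠ 0 := fun h => sq_ne_one hq hq1 (by linarith)
  rw [qIntSym, qNum]
  rw [zpow_sub₀ hq0, zpow_neg, zpow_natCast, zpow_one]
  have hn0 : (q : ℝ) ^ n ≠ 0 := pow_ne_zero _ hq0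
  have h3 : q ^ 2 * q ^ n - q ^ n ≠ 0 := by
    have h4 : q ^ 2 * q ^ n - q ^ n = q ^ n * (q ^ 2 - 1) := by ring
    rw [h4]
    exact mul_ne_zero hn0 (fun h => hd2 (by linarith))
  rw [div_mul_div_comm, div_eq_div_iff hd (mul_ne_zero hn0 hd2)]
  field_simp [hq0, hn0]
  ring

lemma qNum2_pos {q : ℝ} (hq : 0 < q) (hq1 : q ≠ 1) {n : ℕ} (hn : 0 < n) :
    0 < qNum (q ^ 2) n :=
  qNum_pos (by positivity) (sq_ne_one hq hq1) hn

lemma qIntSym_pos {q : ℝ} (hq : 0 < q) (hq1 : q ≠ 1) {n : ℕ} (hn : 0 < n) :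
    0 < qIntSym q n := by
  rw [qIntSym_qNum hq hq1]
  exact mul_pos (Real.rpow_pos_of_pos hq _) (qNum2_pos hq hq1 hn)

lemma qFactSym_pos {q : ℝ} (hq : 0 < q) (hq1 : q ≠ 1) (n : ℕ) : 0 < qFactSym q n :=
  Finset.prod_pos fun i _ => qIntSym_pos hq hq1 (Nat.succ_pos i)

lemma qBinomSym_pos {q : ℝ} (hq : 0 < q) (hq1 : q ≠ 1) (m k : ℕ) : 0 < qBinomSym q m k :=
  div_pos (qFactSym_pos hq hq1 m) (mul_pos (qFactSym_pos hq hq1 k) (qFactSym_pos hq hq1 _))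

lemma qBinom_succ {q : ℝ} (hq : 0 < q) (hq1 : q ≠ 1) {N s : ℕ} (hs : s < N) :
    qBinomSym q N (s + 1) * qIntSym q (s + 1) = qBinomSym q N s * qIntSym q (N - s) := by
  obtain ⟨t, ht⟩ : ∃ t, N - s = t + 1 := ⟨N - s - 1, by omega⟩
  have h1 : N - (s + 1) = t := by omega
  have hstep : ∀ n : ℕ, qFactSym q (n + 1) = qFactSym q n * qIntSym q (n + 1) := fun n =>
    Finset.prod_range_succ _ n
  rw [qBinomSym, qBinomSym, h1, ht, hstep, hstep]
  have f1 := (qFactSym_pos hq hq1 s).ne'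
  have f2 := (qFactSym_pos hq hq1 t).ne'
  have f3 := (qIntSym_pos hq hq1 (Nat.succ_pos s)).ne'
  have f4 := (qIntSym_pos hq hq1 (Nat.succ_pos t)).ne'
  field_simp

lemma keyJp {q : ℝ} (hq : 0 < q) (hq1 : q ≠ 1) {N s : ℕ} (hs : s < N) :
    (q ^ (-(N : ℝ) / 2 * (s : ℝ) - ((N : ℝ) - (s : ℝ))) * Real.sqrt (qBinomSym q N s)) *
      (q ^ (3 / 2 - (N : ℝ) + (s : ℝ)) * qNum (q ^ 2) (N - s))
    = Real.sqrt (qNum (q ^ 2) (N - s) * qNum (q ^ 2) (s + 1)) *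
      (q ^ (-(N : ℝ) / 2 * ((s : ℝ) + 1) - ((N : ℝ) - ((s : ℝ) + 1))) *
        Real.sqrt (qBinomSym q N (s + 1))) := by
  set A := qNum (q ^ 2) (N - s) with hAdef
  set C := qNum (q ^ 2) (s + 1) with hCdef
  have hA : 0 < A := qNum2_pos hq hq1 (by omega)
  have hC : 0 < C := qNum2_pos hq hq1 (by omega)
  have hB : 0 < qBinomSym q N s := qBinomSym_pos hq hq1 N s
  have hB' : 0 < qBinomSym q N (s + 1) := qBinomSym_pos hq hq1 N (s + 1)
  have hI1 : qIntSym q (N - s) = q ^ (1 - ((N : ℝ) - (s : ℝ))) * A := by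
    rw [qIntSym_qNum hq hq1, Nat.cast_sub hs.le]
  have hI2 : qIntSym q (s + 1) = q ^ (-(s : ℝ)) * C := by
    rw [qIntSym_qNum hq hq1, show (1 - ((s + 1 : ℕ) : ℝ)) = -(s : ℝ) by push_cast; ring]
  have hqs : (q : ℝ) ^ (-(s : ℝ)) ≠ 0 := (Real.rpow_pos_of_pos hq _).ne'
  have h := qBinom_succ hq hq1 hs
  rw [hI1, hI2] at h
  have hm : q ^ (1 - ((N : ℝ) - (s : ℝ)))
      = q ^ (2 * (s : ℝ) - (N : ℝ) + 1) * q ^ (-(s : ℝ)) := by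
    rw [← Real.rpow_add hq]; congr 1; ring
  rw [hm] at h
  have key : A * C * qBinomSym q N (s + 1)
      = q ^ (2 * (s : ℝ) - (N : ℝ) + 1) * qBinomSym q N s * A ^ 2 := by
    refine mul_right_cancel₀ hqs ?_
    calc A * C * qBinomSym q N (s + 1) * q ^ (-(s : ℝ))
        = A * (qBinomSym q N (s + 1) * (q ^ (-(s : ℝ)) * C)) := by ring
      _ = A * (qBinomSym q N s * (q ^ (2 * (s : ℝ) - (N : ℝ) + 1) * q ^ (-(s : ℝ)) * A)) := by
          rw [h]
      _ = q ^ (2 * (s : ℝ) - (N : ℝ) + 1) * qBinomSym q N s * A ^ 2 * q ^ (-(s : ℝ)) := by ring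
  have hsq : Real.sqrt (A * C) * Real.sqrt (qBinomSym q N (s + 1))
      = q ^ ((s : ℝ) - (N : ℝ) / 2 + 1 / 2) * (Real.sqrt (qBinomSym q N s) * A) := by
    rw [← Real.sqrt_mul (mul_pos hA hC).le, key, mul_assoc,
      Real.sqrt_mul (by positivity : (0:ℝ) ≤ q ^ (2 * (s:ℝ) - (N:ℝ) + 1)),
      Real.sqrt_mul hB.le, Real.sqrt_sq hA.le]
    have : Real.sqrt (q ^ (2 * (s : ℝ) - (N : ℝ) + 1))
        = q ^ ((s : ℝ) - (N : ℝ) / 2 + 1 / 2) := by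
      rw [Real.sqrt_eq_rpow, ← Real.rpow_mul hq.le]
      congr 1; ring
    rw [this]
  calc (q ^ (-(N : ℝ) / 2 * (s : ℝ) - ((N : ℝ) - (s : ℝ))) * Real.sqrt (qBinomSym q N s)) *
      (q ^ (3 / 2 - (N : ℝ) + (s : ℝ)) * A)
      = (q ^ (-(N : ℝ) / 2 * (s : ℝ) - ((N : ℝ) - (s : ℝ))) * q ^ (3 / 2 - (N : ℝ) + (s : ℝ))) *
        (Real.sqrt (qBinomSym q N s) * A) := by ring
    _ = (q ^ (-(N : ℝ) / 2 * ((s : ℝ) + 1) - ((N : ℝ) - ((s : ℝ) + 1))) *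
        q ^ ((s : ℝ) - (N : ℝ) / 2 + 1 / 2)) * (Real.sqrt (qBinomSym q N s) * A) := by
        rw [← Real.rpow_add hq, ← Real.rpow_add hq]; congr 1; ring
    _ = q ^ (-(N : ℝ) / 2 * ((s : ℝ) + 1) - ((N : ℝ) - ((s : ℝ) + 1))) *
        (Real.sqrt (A * C) * Real.sqrt (qBinomSym q N (s + 1))) := by rw [hsq]; ring
    _ = Real.sqrt (A * C) *
      (q ^ (-(N : ℝ) / 2 * ((s : ℝ) + 1) - ((N : ℝ) - ((s : ℝ) + 1))) *
        Real.sqrt (qBinomSym q N (s + 1))) := by ring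

lemma keyJm {q : ℝ} (hq : 0 < q) (hq1 : q ≠ 1) {N s : ℕ} (hs1 : 1 ≤ s) (hsN : s ≤ N) :
    (q ^ (-(N : ℝ) / 2 * (s : ℝ) - ((N : ℝ) - (s : ℝ))) * Real.sqrt (qBinomSym q N s)) *
      (qNum (q ^ 2) s * q ^ ((N : ℝ) - (s : ℝ) - 1 / 2))
    = Real.sqrt (qNum (q ^ 2) s * qNum (q ^ 2) (N - s + 1)) *
      (q ^ (-(N : ℝ) / 2 * ((s : ℝ) - 1) - ((N : ℝ) - ((s : ℝ) - 1))) *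
        Real.sqrt (qBinomSym q N (s - 1))) := by
  set A := qNum (q ^ 2) s with hAdef
  set C := qNum (q ^ 2) (N - s + 1) with hCdef
  have hA : 0 < A := qNum2_pos hq hq1 (by omega)
  have hC : 0 < C := qNum2_pos hq hq1 (by omega)
  have hB : 0 < qBinomSym q N s := qBinomSym_pos hq hq1 N s
  have hB' : 0 < qBinomSym q N (s - 1) := qBinomSym_pos hq hq1 N (s - 1)
  have h := qBinom_succ hq hq1 (show s - 1 < N by omega)
  rw [show s - 1 + 1 = s by omega, show N - (s - 1) = N - s + 1 by omega] at h
  have hI1 : qIntSym q s = q ^ (1 - (s : ℝ)) * A := by rw [qIntSym_qNum hq hq1]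
  have hI2 : qIntSym q (N - s + 1) = q ^ ((s : ℝ) - (N : ℝ)) * C := by
    rw [qIntSym_qNum hq hq1,
      show (1 - ((N - s + 1 : ℕ) : ℝ)) = (s : ℝ) - (N : ℝ) by
        push_cast [Nat.cast_sub hsN]; ring]
  rw [hI1, hI2] at h
  have hqs : (q : ℝ) ^ ((s : ℝ) - (N : ℝ)) ≠ 0 := (Real.rpow_pos_of_pos hq _).ne'
  have hm : q ^ (1 - (s : ℝ))
      = q ^ ((N : ℝ) - 2 * (s : ℝ) + 1) * q ^ ((s : ℝ) - (N : ℝ)) := by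
    rw [← Real.rpow_add hq]; congr 1; ring
  rw [hm] at h
  have key : A * C * qBinomSym q N (s - 1)
      = q ^ ((N : ℝ) - 2 * (s : ℝ) + 1) * qBinomSym q N s * A ^ 2 := by
    refine mul_right_cancel₀ hqs ?_
    calc A * C * qBinomSym q N (s - 1) * q ^ ((s : ℝ) - (N : ℝ))
        = A * (qBinomSym q N (s - 1) * (q ^ ((s : ℝ) - (N : ℝ)) * C)) := by ring
      _ = A * (qBinomSym q N s *
          (q ^ ((N : ℝ) - 2 * (s : ℝ) + 1) * q ^ ((s : ℝ) - (N : ℝ)) * A)) := by rw [← h]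
      _ = q ^ ((N : ℝ) - 2 * (s : ℝ) + 1) * qBinomSym q N s * A ^ 2 *
          q ^ ((s : ℝ) - (N : ℝ)) := by ring
  have hsq : Real.sqrt (A * C) * Real.sqrt (qBinomSym q N (s - 1))
      = q ^ ((N : ℝ) / 2 - (s : ℝ) + 1 / 2) * (Real.sqrt (qBinomSym q N s) * A) := by
    rw [← Real.sqrt_mul (mul_pos hA hC).le, key, mul_assoc,
      Real.sqrt_mul (by positivity : (0:ℝ) ≤ q ^ ((N : ℝ) - 2 * (s:ℝ) + 1)),
      Real.sqrt_mul hB.le, Real.sqrt_sq hA.le]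
    have : Real.sqrt (q ^ ((N : ℝ) - 2 * (s : ℝ) + 1))
        = q ^ ((N : ℝ) / 2 - (s : ℝ) + 1 / 2) := by
      rw [Real.sqrt_eq_rpow, ← Real.rpow_mul hq.le]
      congr 1; ring
    rw [this]
  calc (q ^ (-(N : ℝ) / 2 * (s : ℝ) - ((N : ℝ) - (s : ℝ))) * Real.sqrt (qBinomSym q N s)) *
      (A * q ^ ((N : ℝ) - (s : ℝ) - 1 / 2))
      = (q ^ (-(N : ℝ) / 2 * (s : ℝ) - ((N : ℝ) - (s : ℝ))) * q ^ ((N : ℝ) - (s : ℝ) - 1 / 2)) *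
        (Real.sqrt (qBinomSym q N s) * A) := by ring
    _ = (q ^ (-(N : ℝ) / 2 * ((s : ℝ) - 1) - ((N : ℝ) - ((s : ℝ) - 1))) *
        q ^ ((N : ℝ) / 2 - (s : ℝ) + 1 / 2)) * (Real.sqrt (qBinomSym q N s) * A) := by
        rw [← Real.rpow_add hq, ← Real.rpow_add hq]; congr 1; ring
    _ = q ^ (-(N : ℝ) / 2 * ((s : ℝ) - 1) - ((N : ℝ) - ((s : ℝ) - 1))) *
        (Real.sqrt (A * C) * Real.sqrt (qBinomSym q N (s - 1))) := by rw [hsq]; ring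
    _ = Real.sqrt (A * C) *
      (q ^ (-(N : ℝ) / 2 * ((s : ℝ) - 1) - ((N : ℝ) - ((s : ℝ) - 1))) *
        Real.sqrt (qBinomSym q N (s - 1))) := by ring

/-- with `j = N/2`, the operators
`J_0 = x∂ − j`, `J_− = D_{q²} q^{−1/2+j−J_0}`, `J_+ = ((2j)_{q²} x − x² D_{q²}) q^{3/2−3j−J_0}`
(given by their action on the basis monomials `X^s`, `0 ≤ s ≤ N`) realize the spin-`j`
representation of `U_q[su(2)]` on the monomials
`Ψ_m = q^{−j(j+m)−(j−m)} [N choose j+m]_q^{1/2} X^{j+m}`, where `m = s − j`. -/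
theorem spin_j_realization (q : ℝ) (hq : 0 < q) (hq1 : q ≠ 1) (N : ℕ)
    (V : Type*) [AddCommGroup V] [Module ℂ V]
    (X : ℕ → V) (J0 Jm Jp : V →ₗ[ℂ] V)
    (hJ0 : ∀ s ≤ N, J0 (X s) = ((s : ℂ) - (N : ℂ) / 2) • X s)
    (hJm0 : Jm (X 0) = 0)
    (hJm : ∀ s, 1 ≤ s → s ≤ N →
      Jm (X s) = ((qNum (q ^ 2) s * q ^ ((N : ℝ) - (s : ℝ) - 1 / 2) : ℝ) : ℂ) • X (s - 1))
    (hJp : ∀ s, s < N →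
      Jp (X s) = ((q ^ (3 / 2 - (N : ℝ) + (s : ℝ)) * qNum (q ^ 2) (N - s) : ℝ) : ℂ) • X (s + 1))
    (hJpN : Jp (X N) = 0)
    (Ψ : ℕ → V)
    (hΨ : ∀ s ≤ N, Ψ s =
      ((q ^ (-(N : ℝ) / 2 * (s : ℝ) - ((N : ℝ) - (s : ℝ))) *
        Real.sqrt (qBinomSym q N s) : ℝ) : ℂ) • X s) :
    (∀ s ≤ N, J0 (Ψ s) = ((s : ℂ) - (N : ℂ) / 2) • Ψ s) ∧
    (∀ s < N, Jp (Ψ s) =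
      ((Real.sqrt (qNum (q ^ 2) (N - s) * qNum (q ^ 2) (s + 1)) : ℝ) : ℂ) • Ψ (s + 1)) ∧
    (∀ s, 1 ≤ s → s ≤ N →
      Jm (Ψ s) =
        ((Real.sqrt (qNum (q ^ 2) s * qNum (q ^ 2) (N - s + 1)) : ℝ) : ℂ) • Ψ (s - 1)) := by
  refine ⟨?_, ?_, ?_⟩
  · intro s hs
    rw [hΨ s hs, map_smul, hJ0 s hs, smul_comm]
  · intro s hs
    rw [hΨ s hs.le, map_smul, hJp s hs, hΨ (s + 1) hs, smul_smul, smul_smul,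
      ← Complex.ofReal_mul, ← Complex.ofReal_mul]
    congr 1
    refine Complex.ofReal_inj.mpr ?_
    push_cast
    exact keyJp hq hq1 hs
  · intro s h1 hN
    rw [hΨ s hN, map_smul, hJm s h1 hN, hΨ (s - 1) (by omega), smul_smul, smul_smul,
      ← Complex.ofReal_mul, ← Complex.ofReal_mul]
    congr 1
    refine Complex.ofReal_inj.mpr ?_
    rw [Nat.cast_sub h1, Nat.cast_one]
    exact keyJm hq hq1 h1 hN
end

section
/- Let w be a nonzero real number and n ≥ 1 an integer. For each positive integer j set q_j = exp(w/j). Then lim_{j→∞} j^{−1/2} √([n]_{q_j} · [2j−n+1]_{q_j}) = √(n · sinh(2w)/w). (This is the high-spin contraction, with A = J_−/√j and q = e^{w/j}, of the U_q[su(2)] matrix elements √([n]_q [2j−n+1]_q) of J_− on |j, −j+n⟩ to the matrix elements √(n · sinh(wp)/w) of the annihilation operator A of the q-deformed Heisenberg algebra U_q[h_1] in its Fock representation.) -/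
open Filter Real Topology

lemma half_div_half (a b : ℝ) : (a/2)/(b/2) = a/b := by
  rw [div_eq_mul_inv a, div_eq_mul_inv b, mul_div_mul_right _ _ (inv_ne_zero two_ne_zero)]

lemma qIntSym_exp (t : ℝ) (m : ℕ) :
    qIntSym (Real.exp t) m = Real.sinh (m * t) / Real.sinh t := by
  unfold qIntSym
  rw [zpow_natCast, zpow_neg, zpow_natCast, ← Real.exp_nat_mul, ← Real.exp_neg,
    ← Real.exp_neg, Real.sinh_eq, Real.sinh_eq, half_div_half, mul_comm (m:ℝ) t]

lemma sinh_div_sinh_nonneg (m : ℕ) (t : ℝ) : 0 ≤ Real.sinh (m * t) / Real.sinh t := by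
  rcases le_or_gt 0 t with h | h
  · exact div_nonneg (Real.sinh_nonneg_iff.mpr (mul_nonneg (Nat.cast_nonneg m) h))
      (Real.sinh_nonneg_iff.mpr h)
  · rw [div_nonneg_iff]
    exact Or.inr ⟨Real.sinh_nonpos_iff.mpr (mul_nonpos_of_nonneg_of_nonpos (Nat.cast_nonneg m) h.le),
      Real.sinh_nonpos_iff.mpr h.le⟩

lemma sinh_div_self_tendsto : Tendsto (fun y : ℝ => Real.sinh y / y) (𝓝[≠] (0:ℝ)) (𝓝 1) := by
  have h := Real.hasDerivAt_sinh 0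
  rw [hasDerivAt_iff_tendsto_slope] at h
  simp only [Real.cosh_zero] at h
  refine h.congr' ?_
  filter_upwards [self_mem_nhdsWithin] with y hy
  simp [slope_def_field, Real.sinh_zero]

/-- the high-spin contraction, with `q_j = e^{w/j}`:
`lim_{j→∞} j^{−1/2} √([n]_{q_j} [2j−n+1]_{q_j}) = √(n · sinh(2w)/w)`. -/
theorem high_spin_limit_annihilation (w : ℝ) (hw : w ≠ 0) (n : ℕ) (hn : 1 ≤ n) :
    Filter.Tendsto
      (fun j : ℕ => (Real.sqrt j)⁻¹ *
        Real.sqrt (qIntSym (Real.exp (w / j)) n * qIntSym (Real.exp (w / j)) (2 * j - n + 1)))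
      Filter.atTop
      (nhds (Real.sqrt (n * Real.sinh (2 * w) / w))) := by
  have hn0 : (n:ℝ) ≠ 0 := Nat.cast_ne_zero.mpr (by omega)
  -- t j = w / j tends to 0 within {0}ᶜ
  have ht : Tendsto (fun j : ℕ => w / j) atTop (𝓝[≠] 0) := by
    rw [tendsto_nhdsWithin_iff]
    refine ⟨tendsto_const_div_atTop_nhds_zero_nat w, ?_⟩
    filter_upwards [eventually_gt_atTop 0] with j hj
    have : (j:ℝ) ≠ 0 := Nat.cast_ne_zero.mpr hj.ne'
    simp [div_ne_zero hw this]
  -- n * t j also tends to 0 within {0}ᶜ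
  have htn : Tendsto (fun j : ℕ => (n:ℝ) * (w / j)) atTop (𝓝[≠] 0) := by
    rw [tendsto_nhdsWithin_iff] at ht ⊢
    constructor
    · have := ht.1.const_mul (n:ℝ)
      simpa using this
    · filter_upwards [ht.2] with j hj
      simp only [Set.mem_compl_iff, Set.mem_singleton_iff] at hj ⊢
      exact mul_ne_zero hn0 hj
  -- sinh t / t → 1
  have hS : Tendsto (fun j : ℕ => Real.sinh (w / j) / (w / j)) atTop (𝓝 1) :=
    sinh_div_self_tendsto.comp ht
  -- sinh (n t) / t → n
  have hN : Tendsto (fun j : ℕ => Real.sinh ((n:ℝ) * (w / j)) / (w / j)) atTop (𝓝 (n:ℝ)) := by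
    have h1 : Tendsto (fun j : ℕ => Real.sinh ((n:ℝ) * (w / j)) / ((n:ℝ) * (w / j)))
        atTop (𝓝 1) := sinh_div_self_tendsto.comp htn
    have h2 := h1.const_mul (n:ℝ)
    rw [mul_one] at h2
    refine h2.congr' ?_
    filter_upwards [eventually_gt_atTop 0] with j hj
    have hjne : (j:ℝ) ≠ 0 := Nat.cast_ne_zero.mpr hj.ne'
    have ht0 : w / (j:ℝ) ≠ 0 := div_ne_zero hw hjne
    field_simp
  -- the argument (2j - n + 1) * (w/j) → 2w
  have hArg : Tendsto (fun j : ℕ => ((2 * j - n + 1 : ℕ) : ℝ) * (w / j)) atTop (𝓝 (2 * w)) := by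
    have base : Tendsto (fun j : ℕ => 2 * w + ((1:ℝ) - n) * w / j) atTop (𝓝 (2 * w + 0)) :=
      tendsto_const_nhds.add (tendsto_const_div_atTop_nhds_zero_nat (((1:ℝ) - n) * w))
    rw [add_zero] at base
    refine base.congr' ?_
    filter_upwards [eventually_ge_atTop n, eventually_gt_atTop 0] with j hjn hj0
    have hjne : (j:ℝ) ≠ 0 := Nat.cast_ne_zero.mpr hj0.ne'
    have hcast : ((2 * j - n + 1 : ℕ) : ℝ) = 2 * (j:ℝ) - n + 1 := by
      rw [Nat.cast_add, Nat.cast_sub (by omega : n ≤ 2 * j)]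
      push_cast; ring
    rw [hcast]
    field_simp
    ring
  -- sinh of the argument → sinh (2w)
  have hM : Tendsto (fun j : ℕ => Real.sinh (((2 * j - n + 1 : ℕ) : ℝ) * (w / j)))
      atTop (𝓝 (Real.sinh (2 * w))) :=
    (Real.continuous_sinh.continuousAt.tendsto).comp hArg
  -- the main quantity G j → n * sinh(2w) / w
  have hden_ne : ((1:ℝ) ^ 2 * w) ≠ 0 := by simpa using hw
  have hG : Tendsto (fun j : ℕ =>
      (Real.sinh ((n:ℝ) * (w / j)) / (w / j)) * Real.sinh (((2 * j - n + 1 : ℕ) : ℝ) * (w / j))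
        / ((Real.sinh (w / j) / (w / j)) ^ 2 * w))
      atTop (𝓝 ((n:ℝ) * Real.sinh (2 * w) / ((1:ℝ) ^ 2 * w))) :=
    (hN.mul hM).div ((hS.pow 2).mul_const w) hden_ne
  rw [show ((n:ℝ) * Real.sinh (2 * w) / ((1:ℝ) ^ 2 * w)) = (n:ℝ) * Real.sinh (2 * w) / w by
    norm_num] at hG
  have hSqrt := (Real.continuous_sqrt.continuousAt.tendsto).comp hG
  refine hSqrt.congr' ?_
  filter_upwards [eventually_ge_atTop n, eventually_gt_atTop 0] with j hjn hj0
  have hjpos : (0:ℝ) < j := Nat.cast_pos.mpr hj0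
  have hjne : (j:ℝ) ≠ 0 := hjpos.ne'
  have ht0 : w / (j:ℝ) ≠ 0 := div_ne_zero hw hjne
  have hs : Real.sinh (w / j) ≠ 0 := Real.sinh_ne_zero.mpr ht0
  simp only [Function.comp_apply]
  rw [qIntSym_exp, qIntSym_exp]
  have hP : 0 ≤ Real.sinh ((n:ℝ) * (w / j)) / Real.sinh (w / j) *
      (Real.sinh (((2 * j - n + 1 : ℕ):ℝ) * (w / j)) / Real.sinh (w / j)) :=
    mul_nonneg (sinh_div_sinh_nonneg n _) (sinh_div_sinh_nonneg (2 * j - n + 1) _)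
  have key : (Real.sinh ((n:ℝ) * (w / j)) / (w / j)) *
      Real.sinh (((2 * j - n + 1 : ℕ):ℝ) * (w / j)) / ((Real.sinh (w / j) / (w / j)) ^ 2 * w)
      = (Real.sinh ((n:ℝ) * (w / j)) / Real.sinh (w / j) *
        (Real.sinh (((2 * j - n + 1 : ℕ):ℝ) * (w / j)) / Real.sinh (w / j))) / j := by
    field_simp
  rw [key, Real.sqrt_div hP, div_eq_inv_mul]
end
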